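/- arXiv:1111.6924 — 6 statements merged into one kernel-verified Lean document; each statement's English description precedes it below -/
import Mathlib

section
/- Let 𝒟⁰ be a collection of subsets of a set S with the property that the intersection of any two members of 𝒟⁰ is a finite union of members of 𝒟⁰. Let 𝒟 be the collection of all nonempty sets of the form A ∖ (B₁ ∪ ⋯ ∪ Bₙ) with A, B₁, …, Bₙ ∈ 𝒟⁰, n ≥ 0, and Bᵢ ⊆ A for all i, and let 𝒜 be the collection of all finite disjoint unions of members of 𝒟 (including the empty union). Then 𝒜 is the ring of sets generated by 𝒟⁰. -/
universe u v

/-- A category of paths: a small category (objects identified with identity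
morphisms) with left and right cancellation and no inverses. -/
structure CategoryOfPaths (Λ : Type u) where
  s : Λ → Λ
  r : Λ → Λ
  comp : Λ → Λ → Λ
  s_comp : ∀ {α β : Λ}, s α = r β → s (comp α β) = s β
  r_comp : ∀ {α β : Λ}, s α = r β → r (comp α β) = r α
  comp_assoc : ∀ {α β γ : Λ}, s α = r β → s β = r γ →
    comp (comp α β) γ = comp α (comp β γ)
  id_comp : ∀ α : Λ, comp (r α) α = α
  comp_id : ∀ α : Λ, comp α (s α) = α
  s_r : ∀ α : Λ, s (r α) = r α
  r_r : ∀ α : Λ, r (r α) = r α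
  r_s : ∀ α : Λ, r (s α) = s α
  s_s : ∀ α : Λ, s (s α) = s α
  left_cancel : ∀ {α β γ : Λ}, s α = r β → s α = r γ → comp α β = comp α γ → β = γ
  right_cancel : ∀ {β γ α : Λ}, s β = r α → s γ = r α → comp β α = comp γ α → β = γ
  no_inverses : ∀ {α β : Λ}, s α = r β → comp α β = s β → α = s β ∧ β = s β

variable {Λ : Type u}

/-- The tail set `αΛ`. -/
def pTail (C : CategoryOfPaths Λ) (α : Λ) : Set Λ :=
  {x | ∃ β, C.s α = C.r β ∧ x = C.comp α β}

/-- `vΛ`, the paths with range `v`. -/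
def pRng (C : CategoryOfPaths Λ) (w : Λ) : Set Λ := {α | C.r α = w}

/-- `Λv`, the paths with source `v`. -/
def pSrc (C : CategoryOfPaths Λ) (w : Λ) : Set Λ := {α | C.s α = w}

/-- `[β]`, the initial segments of `β`. -/
def pSeg (C : CategoryOfPaths Λ) (β : Λ) : Set Λ := {α | β ∈ pTail C α}

/-- `α ⋔ β`. -/
def pMeets (C : CategoryOfPaths Λ) (α β : Λ) : Prop :=
  (pTail C α ∩ pTail C β).Nonempty

/-- `αE`. -/
def pMulSet (C : CategoryOfPaths Λ) (α : Λ) (E : Set Λ) : Set Λ :=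
  {x | ∃ β ∈ E, C.s α = C.r β ∧ x = C.comp α β}

/-- `σ^α(E ∩ αΛ)`, computed inside an ambient subcategory `S`. -/
def pShiftIn (C : CategoryOfPaths Λ) (S : Set Λ) (α : Λ) (E : Set Λ) : Set Λ :=
  {β | β ∈ S ∧ C.s α = C.r β ∧ C.comp α β ∈ E}

/-- `σ^α(E ∩ αΛ)`. -/
def pShift (C : CategoryOfPaths Λ) (α : Λ) (E : Set Λ) : Set Λ :=
  {β | C.s α = C.r β ∧ C.comp α β ∈ E}

/-- `⋁F`: the minimal common extensions of `F`. -/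
def pMinExt (C : CategoryOfPaths Λ) (F : Set Λ) : Set Λ :=
  {ε | (∀ α ∈ F, ε ∈ pTail C α) ∧
    ∀ γ, (∀ α ∈ F, γ ∈ pTail C α) → ε ∈ pTail C γ → γ = ε}

/-- `α ∨ β`: the minimal common extensions of `α` and `β`. -/
def pMinCE (C : CategoryOfPaths Λ) (α β : Λ) : Set Λ := pMinExt C {α, β}

/-- A subcategory of a category of paths, as a set of morphisms. -/
structure IsSubcategory (C : CategoryOfPaths Λ) (Λ₀ : Set Λ) : Prop where
  comp_mem : ∀ {α β : Λ}, α ∈ Λ₀ → β ∈ Λ₀ → C.s α = C.r β → C.comp α β ∈ Λ₀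
  s_mem : ∀ {α : Λ}, α ∈ Λ₀ → C.s α ∈ Λ₀
  r_mem : ∀ {α : Λ}, α ∈ Λ₀ → C.r α ∈ Λ₀

/-- A finitely aligned category of paths. -/
def FinitelyAligned (C : CategoryOfPaths Λ) : Prop :=
  ∀ α β : Λ, ∃ G : Set Λ, G.Finite ∧
    pTail C α ∩ pTail C β = ⋃ ε ∈ G, pTail C ε

/-- A finitely aligned relative category of paths `(Λ₀, Λ)`. -/
def RelFinitelyAligned (C : CategoryOfPaths Λ) (Λ₀ : Set Λ) : Prop :=
  (∀ α ∈ Λ₀, ∀ β ∈ Λ₀, ∃ G : Set Λ, G.Finite ∧ G ⊆ Λ₀ ∧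
      pTail C α ∩ pTail C β = ⋃ ε ∈ G, pTail C ε) ∧
  (∀ α ∈ Λ₀, pTail C α ∩ Λ₀ = pMulSet C α Λ₀)

/-- A ring of sets: contains `∅` and is closed under `∪`, `∩`, and `\`. -/
def IsSetRing {γ : Type v} (R : Set (Set γ)) : Prop :=
  ∅ ∈ R ∧ (∀ E ∈ R, ∀ F ∈ R, E ∪ F ∈ R) ∧ (∀ E ∈ R, ∀ F ∈ R, E ∩ F ∈ R) ∧
    (∀ E ∈ R, ∀ F ∈ R, E \ F ∈ R)

/-- A ring of sets on `S`: a ring of sets all of whose members are subsets of `S`. -/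
def IsSetRingOn {γ : Type v} (S : Set γ) (R : Set (Set γ)) : Prop :=
  IsSetRing R ∧ ∀ E ∈ R, E ⊆ S

/-- The ring of sets generated by a collection. -/
def setRingGen {γ : Type v} (G : Set (Set γ)) : Set (Set γ) :=
  ⋂₀ {R | IsSetRing R ∧ G ⊆ R}

/-- The ring of sets on `S` generated by a collection. -/
def setRingGenOn {γ : Type v} (S : Set γ) (G : Set (Set γ)) : Set (Set γ) :=
  ⋂₀ {R | IsSetRingOn S R ∧ G ⊆ R}

/-- A zigzag: a list of pairs `(αᵢ, βᵢ)` with `r αᵢ = r βᵢ` and `s αᵢ₊₁ = s βᵢ`. -/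
def IsZigzag (C : CategoryOfPaths Λ) (l : List (Λ × Λ)) : Prop :=
  (∀ p ∈ l, C.r p.1 = C.r p.2) ∧ l.Chain' (fun p q => C.s q.1 = C.s p.2)

/-- The (graph of the) zigzag map `φ_ζ = σ^{α₁} β₁ ⋯ σ^{αₙ} βₙ`, computed
inside an ambient subcategory `S`. -/
def zigzagRelIn (C : CategoryOfPaths Λ) (S : Set Λ) : List (Λ × Λ) → Λ → Λ → Prop
  | [], x, y => x = y ∧ x ∈ S
  | p :: rest, x, y => ∃ z, zigzagRelIn C S rest x z ∧ C.s p.2 = C.r z ∧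
      C.s p.1 = C.r y ∧ y ∈ S ∧ C.comp p.2 z = C.comp p.1 y

/-- `A(ζ)`: the domain of the zigzag map. -/
def zigzagDomIn (C : CategoryOfPaths Λ) (S : Set Λ) (l : List (Λ × Λ)) : Set Λ :=
  {x | ∃ y, zigzagRelIn C S l x y}

/-- `𝒟(Λ₀,Λ)⁰_v`: nonempty zigzag sets with entries in `Λ₀` and source `v`,
computed inside the ambient subcategory `S`. -/
def relD0 (C : CategoryOfPaths Λ) (Λ₀ S : Set Λ) (w : Λ) : Set (Set Λ) :=
  {E | E.Nonempty ∧ ∃ (l : List (Λ × Λ)) (h : l ≠ []),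
    IsZigzag C l ∧ (∀ p ∈ l, p.1 ∈ Λ₀ ∧ p.2 ∈ Λ₀) ∧
    C.s (l.getLast h).2 = w ∧ E = zigzagDomIn C S l}

/-- `𝒜(Λ₀,Λ)_v`: the ring of sets generated by the zigzag sets. -/
def relAring (C : CategoryOfPaths Λ) (Λ₀ S : Set Λ) (w : Λ) : Set (Set Λ) :=
  setRingGenOn {α | α ∈ S ∧ C.r α = w} (relD0 C Λ₀ S w)

/-- A filter in a ring of sets. -/
def IsFilterIn {γ : Type v} (R U : Set (Set γ)) : Prop :=
  U.Nonempty ∧ U ⊆ R ∧ (∀ E ∈ U, E.Nonempty) ∧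
    (∀ E ∈ U, ∀ F ∈ U, E ∩ F ∈ U) ∧ (∀ E ∈ U, ∀ F ∈ R, E ⊆ F → F ∈ U)

/-- An ultrafilter in a ring of sets: a maximal filter. -/
def IsUltrafilterIn {γ : Type v} (R U : Set (Set γ)) : Prop :=
  IsFilterIn R U ∧ ∀ V, IsFilterIn R V → U ⊆ V → V = U

/-- A filter base in a ring of sets. -/
def IsFilterBaseIn {γ : Type v} (R B : Set (Set γ)) : Prop :=
  B.Nonempty ∧ B ⊆ R ∧ (∀ E ∈ B, E.Nonempty) ∧
    ∀ E ∈ B, ∀ F ∈ B, ∃ G ∈ B, G ⊆ E ∩ F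

/-- The filter generated by a filter base. -/
def filterGenBy {γ : Type v} (R B : Set (Set γ)) : Set (Set γ) :=
  {E | E ∈ R ∧ ∃ F ∈ B, F ⊆ E}

/-- An ultrafilter base in a ring of sets. -/
def IsUltrafilterBaseIn {γ : Type v} (R B : Set (Set γ)) : Prop :=
  IsFilterBaseIn R B ∧ IsUltrafilterIn R (filterGenBy R B)

/-- A Boolean ring homomorphism defined on a ring of sets `A` with values in a
generalized Boolean algebra. -/
def IsBRHomOn {γ : Type v} {R : Type*} [GeneralizedBooleanAlgebra R]
    (A : Set (Set γ)) (ν : Set γ → R) : Prop :=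
  ν ∅ = ⊥ ∧ (∀ E ∈ A, ∀ F ∈ A, ν (E ∪ F) = ν E ⊔ ν F) ∧
    (∀ E ∈ A, ∀ F ∈ A, ν (E ∩ F) = ν E ⊓ ν F) ∧
    (∀ E ∈ A, ∀ F ∈ A, ν (E \ F) = ν E \ ν F)

/-- `𝒜_v`: the ring of sets on `vΛ` generated by the tail sets. -/
def tailRing (C : CategoryOfPaths Λ) (w : Λ) : Set (Set Λ) :=
  setRingGenOn (pRng C w) {E | ∃ α, C.r α = w ∧ E = pTail C α}

/-- A directed subset. -/
def pDirected (C : CategoryOfPaths Λ) (x : Set Λ) : Prop :=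
  ∀ α ∈ x, ∀ β ∈ x, (pTail C α ∩ pTail C β ∩ x).Nonempty

/-- A hereditary subset. -/
def pHereditary (C : CategoryOfPaths Λ) (x : Set Λ) : Prop :=
  ∀ γ ∈ x, ∀ α : Λ, γ ∈ pTail C α → α ∈ x

/-- `vΛ*`: the nonempty directed hereditary subsets of `vΛ`. -/
def lamStar (C : CategoryOfPaths Λ) (w : Λ) : Set (Set Λ) :=
  {x | x.Nonempty ∧ x ⊆ pRng C w ∧ pDirected C x ∧ pHereditary C x}

/-- `vΛ**`: the maximal directed subsets of `vΛ`. -/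
def lamStarStar (C : CategoryOfPaths Λ) (w : Λ) : Set (Set Λ) :=
  {x | x ⊆ pRng C w ∧ pDirected C x ∧
    ∀ y, y ⊆ pRng C w → pDirected C y → x ⊆ y → y = x}

/-- `αx = ⋃_{γ ∈ x} [αγ]` for `x ∈ s(α)Λ*`. -/
def pMulStar (C : CategoryOfPaths Λ) (α : Λ) (x : Set Λ) : Set Λ :=
  {δ | ∃ γ ∈ x, C.s α = C.r γ ∧ C.comp α γ ∈ pTail C δ}

/-- `𝒰_{C,0}`. -/
def UC0 (C : CategoryOfPaths Λ) (w : Λ) (x : Set Λ) : Set (Set Λ) :=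
  {E | E ∈ tailRing C w ∧ ∃ α ∈ x, pTail C α ⊆ E}

/-- `𝒰_C`. -/
def UC (C : CategoryOfPaths Λ) (w : Λ) (x : Set Λ) : Set (Set Λ) :=
  {E | E ∈ tailRing C w ∧ ∃ α ∈ x, x ∩ pTail C α ⊆ E}

/-- `X_v = vΛ*` as a type. -/
abbrev Xv (C : CategoryOfPaths Λ) (w : Λ) : Type u := {x : Set Λ // x ∈ lamStar C w}

/-- The topology on `X_v` generated by the sets `Ê`, `E ∈ 𝒜_v`. -/
def XvTop (C : CategoryOfPaths Λ) (w : Λ) : TopologicalSpace (Xv C w) :=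
  TopologicalSpace.generateFrom
    {t | ∃ E ∈ tailRing C w, t = {x : Xv C w | E ∈ UC C w x.1}}

/-- The vertices of `Λ`. -/
abbrev Vertex (C : CategoryOfPaths Λ) : Type u := {w : Λ // C.r w = w}

/-- `X`: the disjoint union of the spaces `X_v`. -/
abbrev Xtotal (C : CategoryOfPaths Λ) : Type u := Σ w : Vertex C, Xv C w.1

/-- The disjoint union topology on `X`. -/
def XtotalTop (C : CategoryOfPaths Λ) : TopologicalSpace (Xtotal C) :=
  letI : ∀ w : Vertex C, TopologicalSpace (Xv C w.1) := fun w => XvTop C w.1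
  inferInstance

/-- The boundary `∂Λ`: the closure of `Λ**` in `X`. -/
def boundarySet (C : CategoryOfPaths Λ) : Set (Xtotal C) :=
  @closure _ (XtotalTop C) {p : Xtotal C | p.2.1 ∈ lamStarStar C p.1.1}

/-- An exhaustive subset of `vΛ`. -/
def ExhaustiveAt (C : CategoryOfPaths Λ) (w : Λ) (F : Set Λ) : Prop :=
  ∀ α, C.r α = w → ∃ β ∈ F, pMeets C α β

/-- An aperiodic point of `Λ*`. -/
def pAperiodic (C : CategoryOfPaths Λ) (x : Set Λ) : Prop :=
  ∀ α ∈ x, ∀ β ∈ x, α ≠ β → pShift C α x ≠ pShift C β x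

/-- A right-aperiodic point of `wΛ*`. -/
def pRightAperiodicAt (C : CategoryOfPaths Λ) (w : Λ) (x : Set Λ) : Prop :=
  ∀ α β : Λ, C.s α = w → C.s β = w → α ≠ β → pMulStar C α x ≠ pMulStar C β x

/-- The triples `(α, β, x)` with `s α = s β` and `x ∈ s(α)Λ*`. -/
abbrev pTrip (C : CategoryOfPaths Λ) : Type u :=
  {t : Λ × Λ × Set Λ // C.s t.1 = C.s t.2.1 ∧ t.2.2 ∈ lamStar C (C.s t.1)}

/-- The groupoid equivalence relation on triples. -/
def tripRel (C : CategoryOfPaths Λ) (t t' : pTrip C) : Prop :=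
  ∃ (z : Set Λ) (δ δ' : Λ),
    z ∈ lamStar C (C.s δ) ∧ z ∈ lamStar C (C.s δ') ∧
    C.s t.1.1 = C.r δ ∧ C.s t'.1.1 = C.r δ' ∧
    t.1.2.2 = pMulStar C δ z ∧ t'.1.2.2 = pMulStar C δ' z ∧
    C.comp t.1.1 δ = C.comp t'.1.1 δ' ∧
    C.comp t.1.2.1 δ = C.comp t'.1.2.1 δ'

/-- The ultrafilter space of `𝒜(Λ₀,Λ)_v`. -/
abbrev relXv (C : CategoryOfPaths Λ) (Λ₀ : Set Λ) (w : Λ) : Type u :=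
  {U : Set (Set Λ) // IsUltrafilterIn (relAring C Λ₀ Set.univ w) U}

/-- The topology on the ultrafilter space of `𝒜(Λ₀,Λ)_v` generated by the `Ê`. -/
def relXvTop (C : CategoryOfPaths Λ) (Λ₀ : Set Λ) (w : Λ) :
    TopologicalSpace (relXv C Λ₀ w) :=
  TopologicalSpace.generateFrom
    {t | ∃ E ∈ relAring C Λ₀ Set.univ w, t = {U : relXv C Λ₀ w | E ∈ U.1}}

/-!
Every ring containing `𝒟⁰` contains `𝒜`, so it suffices that `𝒜` is a ring. Intersecting with
or removing a fixed set acts piece by piece. A piece `A \ ⋃ Bᵢ` minus `C ∈ 𝒟⁰` is again a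
piece, and its intersection with `C` is `(A ∩ C) \ ⋃ Bᵢ = ⋃ⱼ Gⱼ \ ⋃ Bᵢ`, the disjoint union of
the pieces `Gⱼ \ (⋃ Bᵢ ∪ ⋃_{k > j} Gₖ)`. Then
`X \ (A \ ⋃ Bᵢ) = (X \ A) ∪ (X ∩ ⋃ Bᵢ)` is a disjoint union because `Bᵢ ⊆ A`, and
`X ∩ ⋃ Bᵢ = (X ∩ B₁) ∪ ((X \ B₁) ∩ ⋃_{i ≥ 2} Bᵢ)`; this gives closure under differences, and
hence under intersections and unions.
-/

section

open Set

variable {S : Type*}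

/-- The family `𝒟`; `finiteDisjointUnions (diffPieces D0)` is `𝒜`. -/
def diffPieces (D0 : Set (Set S)) : Set (Set S) :=
  {Y | Y.Nonempty ∧ ∃ A ∈ D0, ∃ B : Set (Set S),
    B.Finite ∧ B ⊆ D0 ∧ (∀ b ∈ B, b ⊆ A) ∧ Y = A \ ⋃₀ B}

def finiteDisjointUnions (C : Set (Set S)) : Set (Set S) :=
  {X | ∃ F : Set (Set S), F.Finite ∧ F ⊆ C ∧ F.PairwiseDisjoint id ∧ X = ⋃₀ F}

theorem sUnion_mem_of_isSetRing {R F : Set (Set S)} (hR : IsSetRing R) (hF : F.Finite)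
    (hFR : F ⊆ R) : ⋃₀ F ∈ R :=
  SupClosed.sSup_mem (fun _ hE _ hF => hR.2.1 _ hE _ hF) hF hR.1 hFR

namespace finiteDisjointUnions

variable {C : Set (Set S)} {X Y E : Set S}

theorem empty_mem : (∅ : Set S) ∈ finiteDisjointUnions C :=
  ⟨∅, finite_empty, empty_subset C, pairwiseDisjoint_empty, sUnion_empty.symm⟩

theorem of_mem (hX : X ∈ C) : X ∈ finiteDisjointUnions C :=
  ⟨{X}, finite_singleton X, singleton_subset_iff.2 hX, pairwiseDisjoint_singleton X id,
    (sUnion_singleton X).symm⟩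

theorem union_mem (hX : X ∈ finiteDisjointUnions C) (hY : Y ∈ finiteDisjointUnions C)
    (hXY : Disjoint X Y) : X ∪ Y ∈ finiteDisjointUnions C := by
  obtain ⟨F, hF, hFC, hFd, rfl⟩ := hX
  obtain ⟨G, hG, hGC, hGd, rfl⟩ := hY
  refine ⟨F ∪ G, hF.union hG, union_subset hFC hGC, ?_, (sUnion_union F G).symm⟩
  exact pairwiseDisjoint_union.2 ⟨hFd, hGd, fun D hD D' hD' _ =>
    hXY.mono (subset_sUnion_of_mem hD) (subset_sUnion_of_mem hD')⟩

theorem inter_mem_of_forall (hX : X ∈ finiteDisjointUnions C)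
    (h : ∀ D ∈ C, D ∩ E ∈ finiteDisjointUnions C) : X ∩ E ∈ finiteDisjointUnions C := by
  obtain ⟨F, hF, hFC, hFd, rfl⟩ := hX
  induction F, hF using Set.Finite.induction_on with
  | empty => simpa using empty_mem
  | @insert D F hD _ ih =>
    obtain ⟨hFd, hDF⟩ := (pairwiseDisjoint_insert_of_notMem hD).1 hFd
    rw [sUnion_insert, union_inter_distrib_right]
    refine union_mem (h D (hFC (mem_insert D F))) (ih ((subset_insert D F).trans hFC) hFd) ?_
    exact (disjoint_sUnion_right.2 hDF).mono inter_subset_left inter_subset_left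

theorem sdiff_mem_of_forall (hX : X ∈ finiteDisjointUnions C)
    (h : ∀ D ∈ C, D \ E ∈ finiteDisjointUnions C) : X \ E ∈ finiteDisjointUnions C :=
  inter_mem_of_forall hX h

theorem subset_of_isSetRing {R : Set (Set S)} (hR : IsSetRing R) (hCR : C ⊆ R) :
    finiteDisjointUnions C ⊆ R := by
  rintro _ ⟨F, hF, hFC, -, rfl⟩
  exact sUnion_mem_of_isSetRing hR hF (hFC.trans hCR)

end finiteDisjointUnions

theorem diffPieces_subset_of_isSetRing {D0 R : Set (Set S)} (hR : IsSetRing R) (hD0R : D0 ⊆ R) :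
    diffPieces D0 ⊆ R := by
  rintro _ ⟨-, A, hA, B, hB, hBD0, -, rfl⟩
  exact hR.2.2.2 _ (hD0R hA) _ (sUnion_mem_of_isSetRing hR hB (hBD0.trans hD0R))

namespace diffPieces

open finiteDisjointUnions

variable {D0 : Set (Set S)}
  (hD0 : ∀ E ∈ D0, ∀ F ∈ D0, ∃ G : Set (Set S), G.Finite ∧ G ⊆ D0 ∧ E ∩ F = ⋃₀ G)
include hD0

/-- Replacing each `b ∈ B` by the members of `D0` covering `b ∩ A` makes `B` a family of
subsets of `A`. -/
theorem sdiff_sUnion_mem {A : Set S} {B : Set (Set S)} (hA : A ∈ D0) (hB : B.Finite)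
    (hBD0 : B ⊆ D0) : A \ ⋃₀ B ∈ finiteDisjointUnions (diffPieces D0) := by
  choose! G hG hGD0 hGA using fun b (hb : b ∈ B) => hD0 b (hBD0 hb) A hA
  have hcover : A \ ⋃₀ B = A \ ⋃₀ ⋃ b ∈ B, G b := by
    ext x
    refine and_congr_right fun hxA => not_congr ⟨fun ⟨b, hb, hxb⟩ => ?_, fun ⟨g, hg, hxg⟩ => ?_⟩
    · obtain ⟨g, hg, hxg⟩ : x ∈ ⋃₀ G b := hGA b hb ▸ ⟨hxb, hxA⟩
      exact ⟨g, mem_biUnion hb hg, hxg⟩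
    · obtain ⟨b, hb, hg⟩ := mem_iUnion₂.1 hg
      exact ⟨b, hb, (hGA b hb ▸ subset_sUnion_of_mem hg : g ⊆ b ∩ A) hxg |>.1⟩
  rcases (A \ ⋃₀ B).eq_empty_or_nonempty with hempty | hne
  · exact hempty ▸ empty_mem
  refine of_mem ⟨hne, A, hA, _, hB.biUnion hG, iUnion₂_subset hGD0, ?_, hcover⟩
  simp only [mem_iUnion, exists_prop, forall_exists_index, and_imp]
  exact fun g b hb hg => (subset_sUnion_of_mem hg).trans (hGA b hb ▸ inter_subset_right)

theorem sUnion_sdiff_sUnion_mem {G B : Set (Set S)} (hG : G.Finite) (hGD0 : G ⊆ D0)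
    (hB : B.Finite) (hBD0 : B ⊆ D0) : ⋃₀ G \ ⋃₀ B ∈ finiteDisjointUnions (diffPieces D0) := by
  induction G, hG using Set.Finite.induction_on with
  | empty => simpa using empty_mem
  | @insert g G _ hG ih =>
    obtain ⟨hg, hGD0⟩ := insert_subset_iff.1 hGD0
    have hsplit : ⋃₀ insert g G \ ⋃₀ B = g \ ⋃₀ (G ∪ B) ∪ (⋃₀ G \ ⋃₀ B) := by
      ext x
      simp only [sUnion_insert, sUnion_union, mem_sdiff, mem_union]
      tauto
    rw [hsplit]
    refine union_mem (sdiff_sUnion_mem hD0 hg (hG.union hB) (union_subset hGD0 hBD0)) (ih hGD0) ?_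
    exact disjoint_sdiff_left.mono_right (sUnion_union G B ▸ sdiff_subset.trans subset_union_left)

theorem sdiff_mem_of_mem {X A : Set S} (hX : X ∈ finiteDisjointUnions (diffPieces D0))
    (hA : A ∈ D0) : X \ A ∈ finiteDisjointUnions (diffPieces D0) := by
  refine sdiff_mem_of_forall hX ?_
  rintro _ ⟨-, A', hA', B, hB, hBD0, -, rfl⟩
  rw [sdiff_sdiff, union_comm, ← sUnion_insert]
  exact sdiff_sUnion_mem hD0 hA' (hB.insert A) (insert_subset hA hBD0)

theorem inter_mem_of_mem {X A : Set S} (hX : X ∈ finiteDisjointUnions (diffPieces D0))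
    (hA : A ∈ D0) : X ∩ A ∈ finiteDisjointUnions (diffPieces D0) := by
  refine inter_mem_of_forall hX ?_
  rintro _ ⟨-, A', hA', B, hB, hBD0, -, rfl⟩
  obtain ⟨G, hG, hGD0, hGA⟩ := hD0 A' hA' A hA
  rw [← inter_sdiff_right_comm, hGA]
  exact sUnion_sdiff_sUnion_mem hD0 hG hGD0 hB hBD0

theorem inter_sUnion_mem {X : Set S} {B : Set (Set S)}
    (hX : X ∈ finiteDisjointUnions (diffPieces D0)) (hB : B.Finite) (hBD0 : B ⊆ D0) :
    X ∩ ⋃₀ B ∈ finiteDisjointUnions (diffPieces D0) := by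
  induction B, hB using Set.Finite.induction_on generalizing X with
  | empty => simpa using empty_mem
  | @insert b B _ _ ih =>
    obtain ⟨hb, hBD0⟩ := insert_subset_iff.1 hBD0
    have hsplit : X ∩ ⋃₀ insert b B = X ∩ b ∪ (X \ b) ∩ ⋃₀ B := by
      ext x
      simp only [sUnion_insert, mem_inter_iff, mem_union, mem_sdiff]
      tauto
    rw [hsplit]
    exact union_mem (inter_mem_of_mem hD0 hX hb) (ih (sdiff_mem_of_mem hD0 hX hb) hBD0)
      (disjoint_sdiff_inter.symm.mono_right inter_subset_left)

theorem sdiff_mem_of_mem_diffPieces {X D : Set S} (hX : X ∈ finiteDisjointUnions (diffPieces D0))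
    (hD : D ∈ diffPieces D0) : X \ D ∈ finiteDisjointUnions (diffPieces D0) := by
  obtain ⟨-, A, hA, B, hB, hBD0, hBA, rfl⟩ := hD
  rw [sdiff_sdiff_right]
  exact union_mem (sdiff_mem_of_mem hD0 hX hA) (inter_sUnion_mem hD0 hX hB hBD0)
    (disjoint_sdiff_left.mono_right (inter_subset_right.trans (sUnion_subset hBA)))

theorem sdiff_mem {X Y : Set S} (hX : X ∈ finiteDisjointUnions (diffPieces D0))
    (hY : Y ∈ finiteDisjointUnions (diffPieces D0)) :
    X \ Y ∈ finiteDisjointUnions (diffPieces D0) := by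
  obtain ⟨F, hF, hFD, -, rfl⟩ := hY
  induction F, hF using Set.Finite.induction_on generalizing X with
  | empty => simpa using hX
  | @insert D F _ _ ih =>
    obtain ⟨hD, hFD⟩ := insert_subset_iff.1 hFD
    rw [sUnion_insert, ← sdiff_sdiff]
    exact ih (sdiff_mem_of_mem_diffPieces hD0 hX hD) hFD

theorem isSetRing : IsSetRing (finiteDisjointUnions (diffPieces D0)) := by
  refine ⟨empty_mem, fun X hX Y hY => ?_, fun X hX Y hY => ?_, fun X hX Y hY => sdiff_mem hD0 hX hY⟩
  · rw [← sdiff_union_self]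
    exact union_mem (sdiff_mem hD0 hX hY) hY disjoint_sdiff_left
  · rw [← sdiff_sdiff_right_self]
    exact sdiff_mem hD0 hX (sdiff_mem hD0 hX hY)

theorem subset_finiteDisjointUnions : D0 ⊆ finiteDisjointUnions (diffPieces D0) := fun A hA => by
  simpa using sdiff_sUnion_mem hD0 hA finite_empty (empty_subset D0)

end diffPieces

end

/-- Lemma 1.6. If the intersection of two sets from `𝒟⁰` is a
finite union of sets from `𝒟⁰`, then the collection `𝒜` of finite disjoint
unions of nonempty sets of the form `A \ (B₁ ∪ ⋯ ∪ Bₙ)` (with `A, Bᵢ ∈ 𝒟⁰`,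
`Bᵢ ⊆ A`) is the ring of sets generated by `𝒟⁰`. -/
theorem statement0 {S : Type*} (D0 : Set (Set S))
    (hD0 : ∀ E ∈ D0, ∀ F ∈ D0, ∃ G : Set (Set S), G.Finite ∧ G ⊆ D0 ∧ E ∩ F = ⋃₀ G) :
    {X : Set S | ∃ F : Set (Set S), F.Finite ∧
        F ⊆ {Y | Y.Nonempty ∧ ∃ A ∈ D0, ∃ B : Set (Set S),
          B.Finite ∧ B ⊆ D0 ∧ (∀ b ∈ B, b ⊆ A) ∧ Y = A \ ⋃₀ B} ∧
        F.PairwiseDisjoint id ∧ X = ⋃₀ F} = setRingGen D0 := by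
  change finiteDisjointUnions (diffPieces D0) = setRingGen D0
  refine Set.Subset.antisymm (fun X hX => Set.mem_sInter.2 ?_) fun X hX =>
    Set.mem_sInter.1 hX _ ⟨diffPieces.isSetRing hD0, diffPieces.subset_finiteDisjointUnions hD0⟩
  rintro R ⟨hR, hD0R⟩
  exact finiteDisjointUnions.subset_of_isSetRing hR (diffPieces_subset_of_isSetRing hR hD0R) hX
end

section
/- Let (Λ₀, Λ) be a finitely aligned relative category of paths and let F ⊆ Λ₀ be a finite nonempty subset. Then ⋁F is finite, ⋁F ⊆ Λ₀, and ⋂_{α∈F} αΛ = ⋃_{β∈⋁F} βΛ. -/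
universe u v

variable {Λ : Type u}

/-! The intersection `⋂_{α∈F} αΛ` is, by induction on `F` using finite alignment, a union
`⋃_{ε∈G} εΛ` over a finite `G ⊆ Λ₀`. In such a union every minimal element lies in `G`, and every
element extends a minimal one: take `ε ∈ G` below it with `εΛ` maximal among those, which exists
since `G` is finite. -/

section

variable (C : CategoryOfPaths Λ)

def pMinimal (T : Set Λ) : Set Λ :=
  {ε | ε ∈ T ∧ ∀ γ ∈ T, ε ∈ pTail C γ → γ = ε}

def IsFiniteTailUnion (Λ₀ T : Set Λ) : Prop :=
  ∃ G : Set Λ, G.Finite ∧ G ⊆ Λ₀ ∧ T = ⋃ ε ∈ G, pTail C ε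

lemma mem_pTail_self (α : Λ) : α ∈ pTail C α :=
  ⟨C.s α, (C.r_s α).symm, (C.comp_id α).symm⟩

lemma pTail_subset_of_mem {α β : Λ} (h : β ∈ pTail C α) : pTail C β ⊆ pTail C α := by
  rintro _ ⟨δ, hδ, rfl⟩
  obtain ⟨γ, hγ, rfl⟩ := h
  have hγδ : C.s γ = C.r δ := by rwa [C.s_comp hγ] at hδ
  exact ⟨C.comp γ δ, by rwa [C.r_comp hγδ], C.comp_assoc hγ hγδ⟩

lemma pTail_antisymm {α β : Λ} (h₁ : β ∈ pTail C α) (h₂ : α ∈ pTail C β) : α = β := by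
  obtain ⟨γ, hγ, rfl⟩ := h₁
  obtain ⟨δ, hδ, hα⟩ := h₂
  have hγδ : C.s γ = C.r δ := by rwa [C.s_comp hγ] at hδ
  have hsα : C.s α = C.s δ := by rw [hα, C.s_comp hδ]
  -- `α = α (γ δ)`, so `γ δ = s(α)` by cancellation, and `γ` is a vertex as there are no inverses
  have hcancel : C.comp α (C.s α) = C.comp α (C.comp γ δ) := by
    rw [C.comp_id, ← C.comp_assoc hγ hγδ, ← hα]
  have hvertex : C.s α = C.comp γ δ :=
    C.left_cancel (C.r_s α).symm (by rwa [C.r_comp hγδ]) hcancel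
  have hγ_eq : γ = C.s δ := (C.no_inverses hγδ (hvertex.symm.trans hsα)).1
  rw [hγ_eq, ← hsα, C.comp_id]

lemma isFiniteTailUnion_pTail_inter (Λ₀ : Set Λ) (hfa : RelFinitelyAligned C Λ₀) {α : Λ}
    (hα : α ∈ Λ₀) {T : Set Λ} (hT : IsFiniteTailUnion C Λ₀ T) :
    IsFiniteTailUnion C Λ₀ (pTail C α ∩ T) := by
  obtain ⟨G, hGfin, hGsub, rfl⟩ := hT
  choose H hHfin hHsub hH using fun (ε : Λ) (hε : ε ∈ G) => hfa.1 α hα ε (hGsub hε)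
  refine ⟨⋃ ε, ⋃ hε : ε ∈ G, H ε hε, hGfin.biUnion' hHfin,
    Set.iUnion₂_subset hHsub, ?_⟩
  simp only [Set.inter_iUnion₂, Set.biUnion_iUnion]
  exact Set.iUnion₂_congr hH

lemma isFiniteTailUnion_biInter_pTail (Λ₀ : Set Λ) (hfa : RelFinitelyAligned C Λ₀)
    {F : Set Λ} (hfin : F.Finite) (hne : F.Nonempty) (hF : F ⊆ Λ₀) :
    IsFiniteTailUnion C Λ₀ (⋂ α ∈ F, pTail C α) := by
  induction F, hfin using Set.Finite.induction_on with
  | empty => exact absurd hne Set.not_nonempty_empty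
  | @insert a s _ _ ih =>
    have ha : a ∈ Λ₀ := hF (Set.mem_insert a s)
    rw [Set.biInter_insert]
    rcases s.eq_empty_or_nonempty with rfl | hs
    · exact ⟨{a}, Set.finite_singleton a, Set.singleton_subset_iff.2 ha, by simp⟩
    · exact isFiniteTailUnion_pTail_inter C Λ₀ hfa ha
        (ih hs ((Set.subset_insert a s).trans hF))

variable {C}

lemma pTail_subset_of_mem_biUnion {G : Set Λ} {β : Λ} (hβ : β ∈ ⋃ ε ∈ G, pTail C ε) :
    pTail C β ⊆ ⋃ ε ∈ G, pTail C ε := by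
  obtain ⟨ε, hε, hβε⟩ := Set.mem_iUnion₂.1 hβ
  exact (pTail_subset_of_mem C hβε).trans (Set.subset_biUnion_of_mem hε)

lemma pMinimal_biUnion_subset (G : Set Λ) : pMinimal C (⋃ ε ∈ G, pTail C ε) ⊆ G := by
  rintro β ⟨hβT, hβmin⟩
  obtain ⟨ε, hε, hβε⟩ := Set.mem_iUnion₂.1 hβT
  rwa [← hβmin ε (Set.mem_biUnion hε (mem_pTail_self C ε)) hβε]

lemma biUnion_pMinimal_biUnion {G : Set Λ} (hG : G.Finite) :
    ⋃ β ∈ pMinimal C (⋃ ε ∈ G, pTail C ε), pTail C β = ⋃ ε ∈ G, pTail C ε := by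
  refine Set.Subset.antisymm (Set.iUnion₂_subset fun β hβ => pTail_subset_of_mem_biUnion hβ.1)
    fun δ hδ => ?_
  obtain ⟨ε₀, hε₀, hδε₀⟩ := Set.mem_iUnion₂.1 hδ
  obtain ⟨ε, ⟨hεG, hδε⟩, hεmax⟩ := Set.Finite.exists_maximalFor (pTail C)
    {ε | ε ∈ G ∧ δ ∈ pTail C ε} (hG.subset fun _ h => h.1) ⟨ε₀, hε₀, hδε₀⟩
  refine Set.mem_biUnion ⟨Set.mem_biUnion hεG (mem_pTail_self C ε), fun γ hγ hεγ => ?_⟩ hδε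
  obtain ⟨ε', hε'G, hγε'⟩ := Set.mem_iUnion₂.1 hγ
  have hεε' : ε ∈ pTail C ε' := pTail_subset_of_mem C hγε' hεγ
  have hε'ε : ε' ∈ pTail C ε :=
    hεmax ⟨hε'G, pTail_subset_of_mem C hεε' hδε⟩ (pTail_subset_of_mem C hεε')
      (mem_pTail_self C ε')
  exact pTail_antisymm C hεγ (pTail_subset_of_mem C hε'ε hγε')

end

theorem statement1_general {Λ : Type u} (C : CategoryOfPaths Λ) (Λ₀ : Set Λ)
    (hfa : RelFinitelyAligned C Λ₀)
    (F : Set Λ) (hfin : F.Finite) (hne : F.Nonempty) (hF : F ⊆ Λ₀) :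
    (pMinExt C F).Finite ∧ pMinExt C F ⊆ Λ₀ ∧
      (⋂ α ∈ F, pTail C α) = ⋃ β ∈ pMinExt C F, pTail C β := by
  obtain ⟨G, hGfin, hGsub, hG⟩ := isFiniteTailUnion_biInter_pTail C Λ₀ hfa hfin hne hF
  have hmin : pMinExt C F = pMinimal C (⋂ α ∈ F, pTail C α) := by
    ext ε
    simp only [pMinExt, pMinimal, Set.mem_iInter₂]
  rw [hmin, hG]
  have hminG := pMinimal_biUnion_subset (C := C) G
  exact ⟨hGfin.subset hminG, hminG.trans hGsub, (biUnion_pMinimal_biUnion hGfin).symm⟩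

/-- Lemma 2.2. In a finitely aligned relative category of
paths `(Λ₀, Λ)`, for any finite nonempty `F ⊆ Λ₀`, the set `⋁F` of minimal
common extensions is finite, contained in `Λ₀`, and
`⋂_{α ∈ F} αΛ = ⋃_{β ∈ ⋁F} βΛ`. -/
theorem statement1 {Λ : Type u} (C : CategoryOfPaths Λ) (Λ₀ : Set Λ)
    (hsub : IsSubcategory C Λ₀) (hfa : RelFinitelyAligned C Λ₀)
    (F : Set Λ) (hfin : F.Finite) (hne : F.Nonempty) (hF : F ⊆ Λ₀) :
    (pMinExt C F).Finite ∧ pMinExt C F ⊆ Λ₀ ∧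
      (⋂ α ∈ F, pTail C α) = ⋃ β ∈ pMinExt C F, pTail C β :=
  statement1_general C Λ₀ hfa F hfin hne hF
end

section
/- Let (Λ₀, Λ) be a finitely aligned relative category of paths, and let ζ be a zigzag all of whose entries lie in Λ₀. Then φ_ζ is a finite union of maps of the form (γ·) ∘ σ^δ with γ, δ ∈ Λ₀: there exist finitely many pairs (γ₁, δ₁), …, (γ_k, δ_k) ∈ Λ₀ × Λ₀ with s(γᵢ) = s(δᵢ) for each i, such that A(ζ) = ⋃ᵢ δᵢΛ and φ_ζ(δᵢβ) = γᵢβ for every i and every β ∈ s(δᵢ)Λ. -/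
/-! Maps `γσ^δ` with `γ, δ ∈ Λ₀` compose to finite unions of maps of the same form:
`(γ'σ^{δ'}) ∘ (γσ^δ)` is the union of the maps `(γ'b)σ^{δa}` over the finitely many
generators `γa = δ'b` of `γΛ ∩ δ'Λ`, which relative finite alignment provides inside `Λ₀`.
Since `(β·) = βσ^{s(β)}` and `σ^α = s(α)σ^α` are of this form, so is every zigzag map with
entries in `Λ₀`, being a composite of such maps. -/

universe u v

variable {Λ : Type u}

lemma RelFinitelyAligned.exists_mem_eq_comp {C : CategoryOfPaths Λ} {Λ₀ : Set Λ}
    (hfa : RelFinitelyAligned C Λ₀) {α ε : Λ} (hα : α ∈ Λ₀) (hε : ε ∈ pTail C α)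
    (hε₀ : ε ∈ Λ₀) : ∃ a ∈ Λ₀, C.s α = C.r a ∧ ε = C.comp α a :=
  (hfa.2 α hα ▸ ⟨hε, hε₀⟩ : ε ∈ pMulSet C α Λ₀)

lemma RelFinitelyAligned.exists_finite_common_extensions {C : CategoryOfPaths Λ}
    {Λ₀ : Set Λ} (hfa : RelFinitelyAligned C Λ₀) {α β : Λ} (hα : α ∈ Λ₀) (hβ : β ∈ Λ₀) :
    ∃ F : Set (Λ × Λ), F.Finite ∧
      (∀ ab ∈ F, ab.1 ∈ Λ₀ ∧ ab.2 ∈ Λ₀ ∧ C.s α = C.r ab.1 ∧ C.s β = C.r ab.2 ∧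
        C.comp α ab.1 = C.comp β ab.2) ∧
      pTail C α ∩ pTail C β = ⋃ ab ∈ F, pTail C (C.comp α ab.1) := by
  obtain ⟨G, hGfin, hG₀, hG⟩ := hfa.1 α hα β hβ
  have hfactor : ∀ ε ∈ G, ∃ ab : Λ × Λ, ab.1 ∈ Λ₀ ∧ ab.2 ∈ Λ₀ ∧ C.s α = C.r ab.1 ∧
      C.s β = C.r ab.2 ∧ ε = C.comp α ab.1 ∧ ε = C.comp β ab.2 := by
    intro ε hε
    have hmem : ε ∈ pTail C α ∩ pTail C β :=
      hG ▸ Set.mem_biUnion hε ⟨C.s ε, (C.r_s ε).symm, (C.comp_id ε).symm⟩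
    obtain ⟨a, ha₀, ha, rfl⟩ := hfa.exists_mem_eq_comp hα hmem.1 (hG₀ hε)
    obtain ⟨b, hb₀, hb, hab⟩ := hfa.exists_mem_eq_comp hβ hmem.2 (hG₀ hε)
    exact ⟨(a, b), ha₀, hb₀, ha, hb, rfl, hab⟩
  choose! f hf using hfactor
  refine ⟨f '' G, hGfin.image f, ?_, ?_⟩
  · rintro _ ⟨ε, hε, rfl⟩
    obtain ⟨ha₀, hb₀, ha, hb, hεa, hεb⟩ := hf ε hε
    exact ⟨ha₀, hb₀, ha, hb, hεa.symm.trans hεb⟩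
  · rw [hG, Set.biUnion_image]
    exact Set.iUnion₂_congr fun ε hε => by rw [← (hf ε hε).2.2.2.2.1]

namespace CategoryOfPaths

variable (C : CategoryOfPaths Λ)

lemma s_eq_of_comp_eq {α β a b : Λ} (ha : C.s α = C.r a) (hb : C.s β = C.r b)
    (h : C.comp α a = C.comp β b) : C.s a = C.s b := by
  rw [← C.s_comp ha, ← C.s_comp hb, h]

lemma comp_s_left {β η : Λ} (h : C.s (C.s β) = C.r η) : C.comp (C.s β) η = η := by
  rw [C.s_s] at h
  rw [h, C.id_comp]

/-- The graph of the partial map `γ σ^δ : δβ ↦ γβ`. -/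
def shiftGraph (γ δ x y : Λ) : Prop :=
  ∃ η, C.s δ = C.r η ∧ x = C.comp δ η ∧ y = C.comp γ η

def rightMulRel (β x y : Λ) : Prop := C.s β = C.r x ∧ y = C.comp β x

def leftShiftRel (α x y : Λ) : Prop := C.s α = C.r y ∧ x = C.comp α y

/-- `R` is the graph of the finite union of the maps `γσ^δ`, `(γ, δ) ∈ S`. -/
def IsShiftUnion (Λ₀ : Set Λ) (R : Λ → Λ → Prop) : Prop :=
  ∃ S : Set (Λ × Λ), S.Finite ∧ (∀ q ∈ S, q.1 ∈ Λ₀ ∧ q.2 ∈ Λ₀ ∧ C.s q.1 = C.s q.2) ∧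
    ∀ x y, R x y ↔ ∃ q ∈ S, C.shiftGraph q.1 q.2 x y

/-- A common value `γβ = δ'β'` lies in some `(γa)Λ`, and left cancellation then gives
`β = aη`, `β' = bη`. -/
lemma comp_shiftGraph_iff {γ δ γ' δ' : Λ} (hγδ : C.s γ = C.s δ) (hγδ' : C.s γ' = C.s δ')
    {F : Set (Λ × Λ)}
    (hF : ∀ ab ∈ F, C.s γ = C.r ab.1 ∧ C.s δ' = C.r ab.2 ∧ C.comp γ ab.1 = C.comp δ' ab.2)
    (hcover : pTail C γ ∩ pTail C δ' = ⋃ ab ∈ F, pTail C (C.comp γ ab.1)) (x y : Λ) :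
    Relation.Comp (C.shiftGraph γ δ) (C.shiftGraph γ' δ') x y ↔
      ∃ ab ∈ F, C.shiftGraph (C.comp γ' ab.2) (C.comp δ ab.1) x y := by
  constructor
  · rintro ⟨z, ⟨β, hβ, rfl, rfl⟩, β', hβ', hz, rfl⟩
    have hγβ : C.s γ = C.r β := hγδ.trans hβ
    have hmem : C.comp γ β ∈ pTail C γ ∩ pTail C δ' := ⟨⟨β, hγβ, rfl⟩, β', hβ', hz⟩
    rw [hcover] at hmem
    obtain ⟨⟨a, b⟩, habF, η, hη, hβη⟩ := Set.mem_iUnion₂.mp hmem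
    obtain ⟨ha, hb, hab⟩ := hF _ habF
    dsimp only at ha hb hab hη hβη
    rw [C.s_comp ha] at hη
    have hbη : C.s b = C.r η := C.s_eq_of_comp_eq hb ha hab.symm ▸ hη
    have hβ_eq : β = C.comp a η :=
      C.left_cancel hγβ (by rw [C.r_comp hη, ha]) (by rw [hβη, C.comp_assoc ha hη])
    have hβ'_eq : β' = C.comp b η :=
      C.left_cancel hβ' (by rw [C.r_comp hbη, hb])
        (by rw [← hz, hβη, hab, C.comp_assoc hb hbη])
    subst hβ_eq hβ'_eq
    refine ⟨(a, b), habF, η, ?_, ?_, ?_⟩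
    · rwa [C.s_comp (hγδ ▸ ha)]
    · rw [C.comp_assoc (hγδ ▸ ha) hη]
    · rw [C.comp_assoc (hγδ' ▸ hb) hbη]
  · rintro ⟨⟨a, b⟩, habF, η, hη, rfl, rfl⟩
    obtain ⟨ha, hb, hab⟩ := hF _ habF
    dsimp only at ha hb hab hη ⊢
    rw [C.s_comp (hγδ ▸ ha)] at hη
    have hbη : C.s b = C.r η := C.s_eq_of_comp_eq hb ha hab.symm ▸ hη
    refine ⟨C.comp γ (C.comp a η), ⟨C.comp a η, ?_, ?_, rfl⟩, C.comp b η, ?_, ?_, ?_⟩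
    · rw [C.r_comp hη, ← hγδ, ha]
    · rw [C.comp_assoc (hγδ ▸ ha) hη]
    · rw [C.r_comp hbη, hb]
    · rw [← C.comp_assoc ha hη, hab, C.comp_assoc hb hbη]
    · rw [C.comp_assoc (hγδ' ▸ hb) hbη]

variable {C} {Λ₀ : Set Λ}

lemma IsShiftUnion.comp (hsub : IsSubcategory C Λ₀) (hfa : RelFinitelyAligned C Λ₀)
    {R R' : Λ → Λ → Prop} (hR : C.IsShiftUnion Λ₀ R) (hR' : C.IsShiftUnion Λ₀ R') :
    C.IsShiftUnion Λ₀ (Relation.Comp R R') := by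
  obtain ⟨S, hSfin, hS₀, hRS⟩ := hR
  obtain ⟨S', hS'fin, hS'₀, hRS'⟩ := hR'
  choose! F hF using fun (q : Λ × Λ) (hq : q ∈ S) (q' : Λ × Λ) (hq' : q' ∈ S') =>
    hfa.exists_finite_common_extensions (hS₀ q hq).1 (hS'₀ q' hq').2.1
  let pair (q q' : Λ × Λ) (ab : Λ × Λ) : Λ × Λ := (C.comp q'.1 ab.2, C.comp q.2 ab.1)
  refine ⟨⋃ q ∈ S, ⋃ q' ∈ S', pair q q' '' F q q',
    hSfin.biUnion fun q hq => hS'fin.biUnion fun q' hq' => (hF q hq q' hq').1.image _,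
    ?_, fun x y => ?_⟩
  · simp only [Set.mem_iUnion, Set.mem_image]
    rintro _ ⟨q, hq, q', hq', ab, habF, rfl⟩
    obtain ⟨ha₀, hb₀, ha, hb, hab⟩ := (hF q hq q' hq').2.1 ab habF
    obtain ⟨hγ₀, hδ₀, hγδ⟩ := hS₀ q hq
    obtain ⟨hγ'₀, hδ'₀, hγδ'⟩ := hS'₀ q' hq'
    refine ⟨hsub.comp_mem hγ'₀ hb₀ (hγδ' ▸ hb), hsub.comp_mem hδ₀ ha₀ (hγδ ▸ ha), ?_⟩
    rw [C.s_comp (hγδ' ▸ hb), C.s_comp (hγδ ▸ ha), C.s_eq_of_comp_eq ha hb hab]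
  · have hcomp : ∀ q ∈ S, ∀ q' ∈ S', ∀ x y, Relation.Comp (C.shiftGraph q.1 q.2)
        (C.shiftGraph q'.1 q'.2) x y ↔ ∃ ab ∈ F q q', C.shiftGraph (pair q q' ab).1
          (pair q q' ab).2 x y := fun q hq q' hq' =>
      C.comp_shiftGraph_iff (hS₀ q hq).2.2 (hS'₀ q' hq').2.2
        (fun ab hab => ((hF q hq q' hq').2.1 ab hab).2.2) (hF q hq q' hq').2.2
    simp only [Relation.Comp, hRS, hRS', Set.mem_iUnion, Set.mem_image]
    constructor
    · rintro ⟨z, ⟨q, hq, hxz⟩, q', hq', hzy⟩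
      obtain ⟨ab, habF, hxy⟩ := (hcomp q hq q' hq' x y).1 ⟨z, hxz, hzy⟩
      exact ⟨_, ⟨q, hq, q', hq', ab, habF, rfl⟩, hxy⟩
    · rintro ⟨_, ⟨q, hq, q', hq', ab, habF, rfl⟩, hxy⟩
      obtain ⟨z, hxz, hzy⟩ := (hcomp q hq q' hq' x y).2 ⟨ab, habF, hxy⟩
      exact ⟨z, ⟨q, hq, hxz⟩, q', hq', hzy⟩

lemma isShiftUnion_rightMulRel (hsub : IsSubcategory C Λ₀) {β : Λ} (hβ : β ∈ Λ₀) :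
    C.IsShiftUnion Λ₀ (C.rightMulRel β) := by
  refine ⟨{(β, C.s β)}, Set.finite_singleton _, ?_, fun x y => ?_⟩
  · rintro _ rfl
    exact ⟨hβ, hsub.s_mem hβ, (C.s_s β).symm⟩
  · simp only [Set.mem_singleton_iff, exists_eq_left, shiftGraph, rightMulRel]
    constructor
    · rintro ⟨hx, rfl⟩
      exact ⟨x, by rw [C.s_s, hx], (C.comp_s_left (by rw [C.s_s, hx])).symm, rfl⟩
    · rintro ⟨η, hη, rfl, rfl⟩
      rw [C.comp_s_left hη]
      exact ⟨(C.s_s β).symm.trans hη, rfl⟩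

lemma isShiftUnion_leftShiftRel (hsub : IsSubcategory C Λ₀) {α : Λ} (hα : α ∈ Λ₀) :
    C.IsShiftUnion Λ₀ (C.leftShiftRel α) := by
  refine ⟨{(C.s α, α)}, Set.finite_singleton _, ?_, fun x y => ?_⟩
  · rintro _ rfl
    exact ⟨hsub.s_mem hα, hα, C.s_s α⟩
  · simp only [Set.mem_singleton_iff, exists_eq_left, shiftGraph, leftShiftRel]
    constructor
    · rintro ⟨hy, rfl⟩
      exact ⟨y, hy, rfl, (C.comp_s_left (by rw [C.s_s, hy])).symm⟩
    · rintro ⟨η, hη, rfl, rfl⟩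
      rw [C.comp_s_left (by rw [C.s_s, hη])]
      exact ⟨hη, rfl⟩

lemma zigzagRelIn_univ_nil : zigzagRelIn C Set.univ [] = (· = ·) := by
  ext x y
  simp only [zigzagRelIn, Set.mem_univ, and_true]

lemma zigzagRelIn_univ_cons (p : Λ × Λ) (l : List (Λ × Λ)) :
    zigzagRelIn C Set.univ (p :: l) = Relation.Comp (zigzagRelIn C Set.univ l)
      (Relation.Comp (C.rightMulRel p.2) (C.leftShiftRel p.1)) := by
  ext x y
  simp only [zigzagRelIn, Set.mem_univ, true_and, Relation.Comp, rightMulRel, leftShiftRel,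
    exists_eq_right_right]
  exact exists_congr fun z => ⟨fun ⟨hxz, hz, hy, h⟩ => ⟨hxz, ⟨hz, h.symm⟩, hy⟩,
    fun ⟨hxz, ⟨hz, h⟩, hy⟩ => ⟨hxz, hz, hy, h.symm⟩⟩

theorem isShiftUnion_zigzagRelIn (hsub : IsSubcategory C Λ₀) (hfa : RelFinitelyAligned C Λ₀) :
    ∀ l : List (Λ × Λ), l ≠ [] → (∀ p ∈ l, p.1 ∈ Λ₀ ∧ p.2 ∈ Λ₀) →
      C.IsShiftUnion Λ₀ (zigzagRelIn C Set.univ l)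
  | [], hne, _ => absurd rfl hne
  | p :: l, _, hl => by
    have hp := hl p List.mem_cons_self
    have hstep := (isShiftUnion_rightMulRel hsub hp.2).comp hsub hfa
      (isShiftUnion_leftShiftRel hsub hp.1)
    rw [zigzagRelIn_univ_cons]
    rcases l with _ | ⟨q, l⟩
    · rwa [zigzagRelIn_univ_nil, Relation.eq_comp]
    · exact (isShiftUnion_zigzagRelIn hsub hfa (q :: l) (List.cons_ne_nil q l)
        fun r hr => hl r (List.mem_cons_of_mem p hr)).comp hsub hfa hstep

end CategoryOfPaths

theorem statement2_general {Λ : Type u} (C : CategoryOfPaths Λ) (Λ₀ : Set Λ)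
    (hsub : IsSubcategory C Λ₀) (hfa : RelFinitelyAligned C Λ₀)
    (l : List (Λ × Λ)) (hne : l ≠ [])
    (hl : ∀ p ∈ l, p.1 ∈ Λ₀ ∧ p.2 ∈ Λ₀) :
    ∃ (k : ℕ) (γ δ : Fin k → Λ),
      (∀ i, γ i ∈ Λ₀ ∧ δ i ∈ Λ₀ ∧ C.s (γ i) = C.s (δ i)) ∧
      zigzagDomIn C Set.univ l = ⋃ i, pTail C (δ i) ∧
      (∀ i, ∀ β : Λ, C.s (δ i) = C.r β →
        zigzagRelIn C Set.univ l (C.comp (δ i) β) (C.comp (γ i) β)) := by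
  obtain ⟨S, hSfin, hS₀, hrel⟩ := CategoryOfPaths.isShiftUnion_zigzagRelIn hsub hfa l hne hl
  obtain ⟨k, f, rfl⟩ := hSfin.fin_embedding
  refine ⟨k, fun i => (f i).1, fun i => (f i).2, fun i => hS₀ _ ⟨i, rfl⟩, ?_,
    fun i β hβ => (hrel _ _).2 ⟨f i, ⟨i, rfl⟩, β, hβ, rfl, rfl⟩⟩
  ext x
  simp only [zigzagDomIn, hrel, Set.mem_ofPred_eq, Set.exists_range_iff,
    CategoryOfPaths.shiftGraph, Set.mem_iUnion, pTail]
  exact ⟨fun ⟨_, i, η, hη, hx, _⟩ => ⟨i, η, hη, hx⟩,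
    fun ⟨i, η, hη, hx⟩ => ⟨_, i, η, hη, hx, rfl⟩⟩

/-- Lemma 2.3. In a finitely aligned relative category of
paths, every zigzag map with entries in `Λ₀` is a finite union of maps of the
form `γ σ^δ` with `γ, δ ∈ Λ₀`. -/
theorem statement2 {Λ : Type u} (C : CategoryOfPaths Λ) (Λ₀ : Set Λ)
    (hsub : IsSubcategory C Λ₀) (hfa : RelFinitelyAligned C Λ₀)
    (l : List (Λ × Λ)) (hne : l ≠ []) (hz : IsZigzag C l)
    (hl : ∀ p ∈ l, p.1 ∈ Λ₀ ∧ p.2 ∈ Λ₀) :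
    ∃ (k : ℕ) (γ δ : Fin k → Λ),
      (∀ i, γ i ∈ Λ₀ ∧ δ i ∈ Λ₀ ∧ C.s (γ i) = C.s (δ i)) ∧
      zigzagDomIn C Set.univ l = ⋃ i, pTail C (δ i) ∧
      (∀ i, ∀ β : Λ, C.s (δ i) = C.r β →
        zigzagRelIn C Set.univ l (C.comp (δ i) β) (C.comp (γ i) β)) :=
  statement2_general C Λ₀ hsub hfa l hne hl
end

section
/- Let (Λ₀, Λ) be a relative category of paths, and for each vertex v of Λ₀ let ℬ_v be a ring of sets on vΛ such that: (i) vΛ ∈ ℬ_v for every vertex v of Λ₀; (ii) {αE : E ∈ ℬ_{s(α)}} ⊆ ℬ_{r(α)} for all α ∈ Λ₀; (iii) {σ^α(E ∩ αΛ) : E ∈ ℬ_{r(α)}} ⊆ ℬ_{s(α)} for all α ∈ Λ₀. Then 𝒜(Λ₀,Λ)_v ⊆ ℬ_v for every vertex v of Λ₀; moreover, for all α ∈ Λ₀, {αE : E ∈ ℬ_{s(α)}} = {E ∩ αΛ : E ∈ ℬ_{r(α)}} and {σ^α(E ∩ αΛ) : E ∈ ℬ_{r(α)}} = ℬ_{s(α)}.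 -/
universe u v

variable {Λ : Type u}

/-!
Appending a pair `(α, β)` to a zigzag `ζ` turns `A(ζ)` into `σ^β(α A(ζ))`, and `A(ζ)` of the
empty zigzag is everything, whose image under `α` is `α (s(α)Λ)`. So by induction on the length
of `ζ`, every zigzag set with entries in `Λ₀` lies in `ℬ_{s(ζ)}`, hence so does the ring of sets
they generate. The two identities hold because `α ·` and `σ^α` are mutually inverse bijections
between `s(α)Λ` and `αΛ`: `α σ^α(E) = E ∩ αΛ` and `σ^α(αE) = E` for `E ⊆ s(α)Λ`.
-/

section

variable (C : CategoryOfPaths Λ)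

lemma pMulSet_subset_pTail (α : Λ) (E : Set Λ) : pMulSet C α E ⊆ pTail C α := by
  rintro x ⟨β, -, hαβ, rfl⟩
  exact ⟨β, hαβ, rfl⟩

lemma pMulSet_pShift (α : Λ) (E : Set Λ) : pMulSet C α (pShift C α E) = E ∩ pTail C α := by
  ext x
  constructor
  · rintro ⟨β, ⟨-, hE⟩, hαβ, rfl⟩
    exact ⟨hE, β, hαβ, rfl⟩
  · rintro ⟨hE, β, hαβ, rfl⟩
    exact ⟨β, ⟨hαβ, hE⟩, hαβ, rfl⟩

lemma pShift_pMulSet {α : Λ} {E : Set Λ} (hE : E ⊆ pRng C (C.s α)) :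
    pShift C α (pMulSet C α E) = E := by
  ext β
  constructor
  · rintro ⟨hαβ, γ, hγ, hαγ, hcomp⟩
    rwa [C.left_cancel hαβ hαγ hcomp]
  · intro hβ
    have hαβ : C.s α = C.r β := (hE hβ).symm
    exact ⟨hαβ, β, hβ, hαβ, rfl⟩

lemma pMulSet_univ (α : Λ) : pMulSet C α Set.univ = pMulSet C α (pRng C (C.s α)) := by
  ext x
  constructor
  · rintro ⟨β, -, hαβ, rfl⟩
    exact ⟨β, hαβ.symm, hαβ, rfl⟩
  · rintro ⟨β, -, hαβ, rfl⟩
    exact ⟨β, trivial, hαβ, rfl⟩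

lemma image_pMulSet_eq {α : Λ} {Bs Br : Set (Set Λ)}
    (hmul : ∀ E ∈ Bs, pMulSet C α E ∈ Br) (hshift : ∀ E ∈ Br, pShift C α E ∈ Bs) :
    pMulSet C α '' Bs = {X | ∃ E ∈ Br, X = E ∩ pTail C α} := by
  ext X
  constructor
  · rintro ⟨E, hE, rfl⟩
    exact ⟨pMulSet C α E, hmul E hE, (Set.inter_eq_left.2 (pMulSet_subset_pTail C α E)).symm⟩
  · rintro ⟨E, hE, rfl⟩
    exact ⟨pShift C α E, hshift E hE, pMulSet_pShift C α E⟩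

lemma image_pShift_eq {α : Λ} {Bs Br : Set (Set Λ)}
    (hmul : ∀ E ∈ Bs, pMulSet C α E ∈ Br) (hshift : ∀ E ∈ Br, pShift C α E ∈ Bs)
    (hBs : ∀ E ∈ Bs, E ⊆ pRng C (C.s α)) :
    pShift C α '' Br = Bs := by
  refine Set.Subset.antisymm (Set.image_subset_iff.2 hshift) fun E hE => ?_
  exact ⟨pMulSet C α E, hmul E hE, pShift_pMulSet C (hBs E hE)⟩

lemma zigzagRelIn_append_singleton (p : Λ × Λ) (l : List (Λ × Λ)) (x w : Λ) :
    zigzagRelIn C Set.univ (l ++ [p]) x w ↔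
      ∃ y, C.s p.2 = C.r x ∧ C.s p.1 = C.r y ∧
        C.comp p.2 x = C.comp p.1 y ∧ zigzagRelIn C Set.univ l y w := by
  induction l generalizing w with
  | nil => simp [zigzagRelIn]
  | cons q t ih =>
    simp only [List.cons_append, zigzagRelIn, ih, exists_and_left, Set.mem_univ, true_and]
    grind

lemma zigzagDomIn_append_singleton (p : Λ × Λ) (l : List (Λ × Λ)) :
    zigzagDomIn C Set.univ (l ++ [p]) =
      pShift C p.2 (pMulSet C p.1 (zigzagDomIn C Set.univ l)) := by
  ext x
  simp only [zigzagDomIn, zigzagRelIn_append_singleton, exists_and_left, Set.mem_ofPred_eq,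
    pShift, pMulSet, and_congr_right_iff]
  grind

lemma zigzagDomIn_nil : zigzagDomIn C Set.univ ([] : List (Λ × Λ)) = Set.univ := by
  ext x
  simp [zigzagDomIn, zigzagRelIn]

end

lemma IsZigzag.of_append_singleton {C : CategoryOfPaths Λ} {l : List (Λ × Λ)} {p : Λ × Λ}
    (h : IsZigzag C (l ++ [p])) :
    IsZigzag C l ∧ C.r p.1 = C.r p.2 ∧ ∀ q ∈ l.getLast?, C.s p.1 = C.s q.2 := by
  obtain ⟨hr, hchain⟩ := h
  obtain ⟨hl, -, hlink⟩ := List.isChain_append.1 hchain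
  exact ⟨⟨fun q hq => hr q (by simp [hq]), hl⟩, hr p (by simp), fun q hq => hlink q hq p rfl⟩

lemma IsSetRingOn.mono {γ : Type v} {S T : Set γ} {R : Set (Set γ)} (hR : IsSetRingOn S R)
    (hST : S ⊆ T) : IsSetRingOn T R :=
  ⟨hR.1, fun E hE => (hR.2 E hE).trans hST⟩

lemma setRingGenOn_subset {γ : Type v} {S : Set γ} {G R : Set (Set γ)} (hR : IsSetRingOn S R)
    (hG : G ⊆ R) : setRingGenOn S G ⊆ R :=
  Set.sInter_subset_of_mem ⟨hR, hG⟩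

section

variable (C : CategoryOfPaths Λ) {Λ₀ : Set Λ} {B : Λ → Set (Set Λ)}

lemma pMulSet_univ_mem (hsub : IsSubcategory C Λ₀)
    (h1 : ∀ v, v ∈ Λ₀ → C.r v = v → pRng C v ∈ B v)
    (h2 : ∀ α ∈ Λ₀, ∀ E ∈ B (C.s α), pMulSet C α E ∈ B (C.r α)) {α : Λ} (hα : α ∈ Λ₀) :
    pMulSet C α Set.univ ∈ B (C.r α) := by
  rw [pMulSet_univ]
  exact h2 α hα _ (h1 _ (hsub.s_mem hα) (C.r_s α))

lemma zigzagDomIn_mem (huniv : ∀ α ∈ Λ₀, pMulSet C α Set.univ ∈ B (C.r α))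
    (h2 : ∀ α ∈ Λ₀, ∀ E ∈ B (C.s α), pMulSet C α E ∈ B (C.r α))
    (h3 : ∀ α ∈ Λ₀, ∀ E ∈ B (C.r α), pShift C α E ∈ B (C.s α)) {l : List (Λ × Λ)}
    (hl : IsZigzag C l) (hΛ₀ : ∀ p ∈ l, p.1 ∈ Λ₀ ∧ p.2 ∈ Λ₀) :
    ∀ p ∈ l.getLast?, zigzagDomIn C Set.univ l ∈ B (C.s p.2) := by
  induction l using List.reverseRecOn with
  | nil => simp
  | append_singleton t q ih =>
    intro p hp
    obtain rfl : q = p := by simpa using hp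
    obtain ⟨ht, hq, hlink⟩ := hl.of_append_singleton
    have hqΛ₀ := hΛ₀ q (by simp)
    rw [zigzagDomIn_append_singleton]
    refine h3 q.2 hqΛ₀.2 _ (hq ▸ ?_)
    cases hlast : t.getLast? with
    | none =>
      rw [List.getLast?_eq_none_iff.1 hlast, zigzagDomIn_nil]
      exact huniv q.1 hqΛ₀.1
    | some p' =>
      have hdom := ih ht (fun r hr => hΛ₀ r (by simp [hr])) p' hlast
      rw [← hlink p' hlast] at hdom
      exact h2 q.1 hqΛ₀.1 _ hdom

end

/-- Proposition 2.10. If `ℬ_v` is a family of rings of sets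
on the `vΛ` containing the `vΛ` and invariant under right and left shifts by
elements of `Λ₀`, then `𝒜(Λ₀,Λ)_v ⊆ ℬ_v` for all vertices `v` of `Λ₀`;
moreover `αℬ_{s(α)} = {E ∩ αΛ : E ∈ ℬ_{r(α)}}` and
`σ^α ℬ_{r(α)} = ℬ_{s(α)}` for all `α ∈ Λ₀`. -/
theorem statement3 {Λ : Type u} (C : CategoryOfPaths Λ) (Λ₀ : Set Λ)
    (hsub : IsSubcategory C Λ₀) (B : Λ → Set (Set Λ))
    (hring : ∀ v, v ∈ Λ₀ → C.r v = v → IsSetRingOn (pRng C v) (B v))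
    (h1 : ∀ v, v ∈ Λ₀ → C.r v = v → pRng C v ∈ B v)
    (h2 : ∀ α ∈ Λ₀, ∀ E ∈ B (C.s α), pMulSet C α E ∈ B (C.r α))
    (h3 : ∀ α ∈ Λ₀, ∀ E ∈ B (C.r α), pShift C α E ∈ B (C.s α)) :
    (∀ v, v ∈ Λ₀ → C.r v = v → relAring C Λ₀ Set.univ v ⊆ B v) ∧
    (∀ α ∈ Λ₀, (pMulSet C α) '' B (C.s α)
        = {X | ∃ E ∈ B (C.r α), X = E ∩ pTail C α}) ∧
    (∀ α ∈ Λ₀, (pShift C α) '' B (C.r α) = B (C.s α)) := by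
  refine ⟨fun v hv hrv => ?_, fun α hα => image_pMulSet_eq C (h2 α hα) (h3 α hα),
    fun α hα => image_pShift_eq C (h2 α hα) (h3 α hα) (hring _ (hsub.s_mem hα) (C.r_s α)).2⟩
  refine setRingGenOn_subset ((hring v hv hrv).mono fun _ hx => ⟨trivial, hx⟩) ?_
  rintro _ ⟨-, l, hl, hzz, hΛ₀, rfl, rfl⟩
  exact zigzagDomIn_mem C (fun α => pMulSet_univ_mem C hsub h1 h2) h2 h3 hzz hΛ₀ _
    (List.getLast?_eq_some_getLast hl)
end

section
/- Let (Λ₀, Λ) be a finitely aligned relative category of paths and let v be a vertex of Λ₀. Then the map E ↦ E ∩ Λ₀ restricts to a bijection from 𝒜(Λ₀,Λ)_v onto 𝒜(Λ₀)_v that preserves binary unions, binary intersections, and set differences, where 𝒜(Λ₀)_v = 𝒜(Λ₀,Λ₀)_v is the corresponding ring of sets on vΛ₀ for the category of paths Λ₀. Moreover these bijections are equivariant for the shifts by elements of Λ₀: for α ∈ Λ₀, (αE) ∩ Λ₀ = α(E ∩ Λ₀) for every E ∈ 𝒜(Λ₀,Λ)_{s(α)}, and σ^α(E ∩ αΛ)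 ∩ Λ₀ = σ^α((E ∩ Λ₀) ∩ αΛ₀) for every E ∈ 𝒜(Λ₀,Λ)_{r(α)}. -/
/-!
Every zigzag set `A(ζ)` with entries in `Λ₀` is a finite union of tails `εΛ` with `ε ∈ Λ₀`:
by finite alignment and `αΛ ∩ Λ₀ = αΛ₀`, the shift `σ^μ(aΛ)` of a tail by `μ ∈ Λ₀` is such a
union, and the zigzag map commutes with right multiplication, `φ_ζ(γδ) = φ_ζ(γ)δ`.
Hence each `E ∈ 𝒜(Λ₀,Λ)_v` is covered by finitely many tails `αΛ`, `α ∈ A ⊆ Λ₀`, and whether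
`x ∈ E` depends only on which `α ∈ A` are initial segments of `x`. Iterating finite alignment
gives `ε ∈ Λ₀` with `x ∈ εΛ` and exactly the same initial segments in `A` as `x`, so a nonempty
`E` meets `Λ₀`; applied to `E \ F` this makes `E ↦ E ∩ Λ₀` injective. Surjectivity follows from
`A(ζ) ∩ Λ₀ = A₀(ζ)`, the zigzag set computed inside `Λ₀`.
-/

universe u v

variable {Λ : Type u}

section SetRing

variable {γ : Type v}

theorem isSetRing_setRingGenOn (S : Set γ) (G : Set (Set γ)) :
    IsSetRing (setRingGenOn S G) :=
  ⟨fun _ hR => hR.1.1.1,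
    fun _ hE _ hF R hR => hR.1.1.2.1 _ (hE R hR) _ (hF R hR),
    fun _ hE _ hF R hR => hR.1.1.2.2.1 _ (hE R hR) _ (hF R hR),
    fun _ hE _ hF R hR => hR.1.1.2.2.2 _ (hE R hR) _ (hF R hR)⟩

theorem setRingGenOn_induction {S : Set γ} {G : Set (Set γ)} {P : Set γ → Prop}
    (hGS : ∀ E ∈ G, E ⊆ S) (mem : ∀ E ∈ G, P E) (empty : P ∅)
    (union : ∀ E F, P E → P F → P (E ∪ F)) (inter : ∀ E F, P E → P F → P (E ∩ F))
    (diff : ∀ E F, P E → P F → P (E \ F)) {E : Set γ} (hE : E ∈ setRingGenOn S G) :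
    P E := by
  refine (hE {E | E ⊆ S ∧ P E} ⟨⟨⟨⟨Set.empty_subset S, empty⟩, ?_, ?_, ?_⟩,
    fun _ h => h.1⟩, fun E h => ⟨hGS E h, mem E h⟩⟩).2
  · exact fun E hE F hF => ⟨Set.union_subset hE.1 hF.1, union E F hE.2 hF.2⟩
  · exact fun E hE F hF => ⟨Set.inter_subset_left.trans hE.1, inter E F hE.2 hF.2⟩
  · exact fun E hE F hF => ⟨Set.sdiff_subset.trans hE.1, diff E F hE.2 hF.2⟩

end SetRing

namespace CategoryOfPaths

variable (C : CategoryOfPaths Λ)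

theorem mem_pTail_self (α : Λ) : α ∈ pTail C α :=
  ⟨C.s α, (C.r_s α).symm, (C.comp_id α).symm⟩

variable {C}

theorem pTail_subset_of_mem {γ δ : Λ} (h : γ ∈ pTail C δ) : pTail C γ ⊆ pTail C δ := by
  obtain ⟨τ, hτ, rfl⟩ := h
  rintro x ⟨ρ, hρ, rfl⟩
  have hτρ : C.s τ = C.r ρ := (C.s_comp hτ).symm.trans hρ
  exact ⟨C.comp τ ρ, hτ.trans (C.r_comp hτρ).symm, C.comp_assoc hτ hτρ⟩

theorem pShift_pTail_comp {μ ε : Λ} (h : C.s μ = C.r ε) :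
    pShift C μ (pTail C (C.comp μ ε)) = pTail C ε := by
  ext δ
  constructor
  · rintro ⟨hδ, ρ, hρ, hμδ⟩
    have hερ : C.s ε = C.r ρ := (C.s_comp h).symm.trans hρ
    refine ⟨ρ, hερ, C.left_cancel hδ ?_ (hμδ.trans (C.comp_assoc h hερ))⟩
    rw [C.r_comp hερ]; exact h
  · rintro ⟨ρ, hρ, rfl⟩
    refine ⟨h.trans (C.r_comp hρ).symm, ρ, (C.s_comp h).trans hρ, ?_⟩
    exact (C.comp_assoc h hρ).symm

theorem pShift_pTail_inter (μ : Λ) (E : Set Λ) :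
    pShift C μ (pTail C μ ∩ E) = pShift C μ E := by
  ext δ
  exact ⟨fun h => ⟨h.1, h.2.2⟩, fun h => ⟨h.1, ⟨δ, h.1, rfl⟩, h.2⟩⟩

theorem pShift_biUnion {ι : Type*} (μ : Λ) (I : Set ι) (f : ι → Set Λ) :
    pShift C μ (⋃ i ∈ I, f i) = ⋃ i ∈ I, pShift C μ (f i) := by
  ext δ; simp [pShift]

theorem pMulSet_biUnion {ι : Type*} (γ : Λ) (I : Set ι) (f : ι → Set Λ) :
    pMulSet C γ (⋃ i ∈ I, f i) = ⋃ i ∈ I, pMulSet C γ (f i) := by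
  ext x; simp only [pMulSet, Set.mem_iUnion, Set.mem_ofPred_eq, exists_prop]; grind

theorem pMulSet_pTail {γ t : Λ} (h : C.s γ = C.r t) :
    pMulSet C γ (pTail C t) = pTail C (C.comp γ t) := by
  ext x
  constructor
  · rintro ⟨_, ⟨ρ, hρ, rfl⟩, -, rfl⟩
    exact ⟨ρ, (C.s_comp h).trans hρ, (C.comp_assoc h hρ).symm⟩
  · rintro ⟨ρ, hρ, rfl⟩
    have htρ : C.s t = C.r ρ := (C.s_comp h).symm.trans hρ
    exact ⟨C.comp t ρ, ⟨ρ, htρ, rfl⟩, h.trans (C.r_comp htρ).symm, C.comp_assoc h htρ⟩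

theorem pMulSet_pTail_of_ne {γ t : Λ} (h : C.s γ ≠ C.r t) :
    pMulSet C γ (pTail C t) = ∅ := by
  refine Set.eq_empty_of_forall_notMem ?_
  rintro x ⟨_, ⟨ρ, hρ, rfl⟩, hγ, -⟩
  exact h (hγ.trans (C.r_comp hρ))

def IsTailUnion (C : CategoryOfPaths Λ) (Λ₀ E : Set Λ) : Prop :=
  ∃ T : Set Λ, T.Finite ∧ T ⊆ Λ₀ ∧ E = ⋃ t ∈ T, pTail C t

variable {Λ₀ : Set Λ}

theorem isTailUnion_empty : IsTailUnion C Λ₀ ∅ :=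
  ⟨∅, Set.finite_empty, Set.empty_subset _, by simp⟩

theorem isTailUnion_pTail {α : Λ} (hα : α ∈ Λ₀) : IsTailUnion C Λ₀ (pTail C α) :=
  ⟨{α}, Set.finite_singleton α, Set.singleton_subset_iff.mpr hα, by simp⟩

theorem isTailUnion_biUnion {ι : Type*} {I : Set ι} (hI : I.Finite) {f : ι → Set Λ}
    (hf : ∀ i ∈ I, IsTailUnion C Λ₀ (f i)) : IsTailUnion C Λ₀ (⋃ i ∈ I, f i) := by
  choose! T hTfin hTΛ₀ hT using hf
  refine ⟨⋃ i ∈ I, T i, hI.biUnion hTfin, Set.iUnion₂_subset hTΛ₀, ?_⟩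
  ext x
  simp only [Set.mem_iUnion, exists_prop]
  constructor
  · rintro ⟨i, hi, hx⟩
    rw [hT i hi, Set.mem_iUnion₂] at hx
    obtain ⟨t, ht, hxt⟩ := hx
    exact ⟨t, ⟨i, hi, ht⟩, hxt⟩
  · rintro ⟨t, ⟨i, hi, ht⟩, hxt⟩
    exact ⟨i, hi, hT i hi ▸ Set.mem_biUnion ht hxt⟩

theorem isTailUnion_pShift_pTail (hfa : RelFinitelyAligned C Λ₀)
    {μ a : Λ} (hμ : μ ∈ Λ₀) (ha : a ∈ Λ₀) :
    IsTailUnion C Λ₀ (pShift C μ (pTail C a)) := by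
  obtain ⟨G, hGfin, hGΛ₀, hG⟩ := hfa.1 μ hμ a ha
  rw [← pShift_pTail_inter, hG, pShift_biUnion]
  refine isTailUnion_biUnion hGfin fun ε hε => ?_
  have hεμ : ε ∈ pTail C μ ∩ Λ₀ :=
    ⟨(hG.symm ▸ Set.mem_biUnion hε (C.mem_pTail_self ε) : ε ∈ pTail C μ ∩ pTail C a).1,
      hGΛ₀ hε⟩
  rw [hfa.2 μ hμ] at hεμ
  obtain ⟨ε', hε', h, rfl⟩ := hεμ
  rw [pShift_pTail_comp h]
  exact isTailUnion_pTail hε'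

theorem IsTailUnion.pShift (hfa : RelFinitelyAligned C Λ₀)
    {μ : Λ} (hμ : μ ∈ Λ₀) {E : Set Λ} (hE : IsTailUnion C Λ₀ E) :
    IsTailUnion C Λ₀ (pShift C μ E) := by
  obtain ⟨T, hTfin, hTΛ₀, rfl⟩ := hE
  rw [pShift_biUnion]
  exact isTailUnion_biUnion hTfin fun t ht => isTailUnion_pShift_pTail hfa hμ (hTΛ₀ ht)

theorem IsTailUnion.pMulSet (hsub : IsSubcategory C Λ₀) {γ : Λ} (hγ : γ ∈ Λ₀)
    {E : Set Λ} (hE : IsTailUnion C Λ₀ E) : IsTailUnion C Λ₀ (pMulSet C γ E) := by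
  obtain ⟨T, hTfin, hTΛ₀, rfl⟩ := hE
  rw [pMulSet_biUnion]
  refine isTailUnion_biUnion hTfin fun t ht => ?_
  by_cases h : C.s γ = C.r t
  · rw [pMulSet_pTail h]
    exact isTailUnion_pTail (hsub.comp_mem hγ (hTΛ₀ ht) h)
  · rw [pMulSet_pTail_of_ne h]
    exact isTailUnion_empty

section Zigzag

variable {S : Set Λ}

theorem zigzagRelIn_mem_left : ∀ {l : List (Λ × Λ)} {x y : Λ},
    zigzagRelIn C S l x y → x ∈ S
  | [], _, _, h => h.2
  | _ :: _, _, _, ⟨_, hz, _⟩ => zigzagRelIn_mem_left hz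

theorem zigzagRelIn_mem_right : ∀ {l : List (Λ × Λ)} {x y : Λ},
    zigzagRelIn C S l x y → y ∈ S
  | [], _, _, h => h.1 ▸ h.2
  | _ :: _, _, _, ⟨_, _, _, _, hy, _⟩ => hy

theorem zigzagRelIn_s_eq : ∀ {l : List (Λ × Λ)} {x y : Λ},
    zigzagRelIn C S l x y → C.s x = C.s y
  | [], _, _, h => h.1 ▸ rfl
  | p :: _, _, y, ⟨z, hz, hpz, hpy, _, heq⟩ => by
      rw [zigzagRelIn_s_eq hz, ← C.s_comp hpz, heq, C.s_comp hpy]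

theorem zigzagRelIn_mono {S' : Set Λ} (hSS' : S ⊆ S') : ∀ {l : List (Λ × Λ)} {x y : Λ},
    zigzagRelIn C S l x y → zigzagRelIn C S' l x y
  | [], _, _, h => ⟨h.1, hSS' h.2⟩
  | _ :: _, _, _, ⟨z, hz, hpz, hpy, hy, heq⟩ =>
      ⟨z, zigzagRelIn_mono hSS' hz, hpz, hpy, hSS' hy, heq⟩

theorem zigzagRelIn_functional : ∀ {l : List (Λ × Λ)} {x y y' : Λ},
    zigzagRelIn C S l x y → zigzagRelIn C S l x y' → y = y'
  | [], _, _, _, h, h' => h.1.symm.trans h'.1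
  | _ :: _, _, _, _, ⟨z, hz, _, hpy, _, heq⟩, ⟨z', hz', _, hpy', _, heq'⟩ => by
      obtain rfl : z = z' := zigzagRelIn_functional hz hz'
      exact C.left_cancel hpy hpy' (heq.symm.trans heq')

theorem zigzagRelIn_r_eq : ∀ (l : List (Λ × Λ)) (hl : l ≠ []) {x y : Λ},
    zigzagRelIn C S l x y → C.r x = C.s (l.getLast hl).2
  | [_], _, _, _, ⟨_, ⟨rfl, _⟩, hpz, _⟩ => hpz.symm
  | _ :: q :: rest, _, _, _, ⟨_, hz, _⟩ => by
      rw [List.getLast_cons (List.cons_ne_nil q rest)]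
      exact zigzagRelIn_r_eq (q :: rest) (List.cons_ne_nil q rest) hz

theorem zigzagRelIn_comp : ∀ {l : List (Λ × Λ)} {x y δ : Λ},
    zigzagRelIn C Set.univ l x y → C.s x = C.r δ →
      zigzagRelIn C Set.univ l (C.comp x δ) (C.comp y δ)
  | [], _, _, _, ⟨rfl, _⟩, _ => ⟨rfl, trivial⟩
  | p :: _, _, y, δ, ⟨z, hz, hpz, hpy, _, heq⟩, hδ => by
      have hzδ : C.s z = C.r δ := (zigzagRelIn_s_eq hz).symm.trans hδ
      have hyδ : C.s y = C.r δ := by rw [← C.s_comp hpy, ← heq, C.s_comp hpz, hzδ]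
      refine ⟨C.comp z δ, zigzagRelIn_comp hz hδ, hpz.trans (C.r_comp hzδ).symm,
        hpy.trans (C.r_comp hyδ).symm, trivial, ?_⟩
      rw [← C.comp_assoc hpz hzδ, ← C.comp_assoc hpy hyδ, heq]

theorem zigzagRelIn_of_univ (hsub : IsSubcategory C Λ₀) (hfa : RelFinitelyAligned C Λ₀) :
    ∀ {l : List (Λ × Λ)} {x y : Λ}, zigzagRelIn C Set.univ l x y →
      (∀ p ∈ l, p.1 ∈ Λ₀ ∧ p.2 ∈ Λ₀) → x ∈ Λ₀ → zigzagRelIn C Λ₀ l x y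
  | [], _, _, ⟨hxy, _⟩, _, hx => ⟨hxy, hx⟩
  | p :: _, _, y, ⟨z, hz, hpz, hpy, _, heq⟩, hl, hx => by
      have hp := hl p List.mem_cons_self
      have hz' := zigzagRelIn_of_univ hsub hfa hz
        (fun q hq => hl q (List.mem_cons_of_mem p hq)) hx
      have hpy0 : C.comp p.1 y ∈ pTail C p.1 ∩ Λ₀ :=
        ⟨⟨y, hpy, rfl⟩, heq ▸ hsub.comp_mem hp.2 (zigzagRelIn_mem_right hz') hpz⟩
      rw [hfa.2 p.1 hp.1] at hpy0
      obtain ⟨y', hy', hpy', hyy'⟩ := hpy0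
      obtain rfl := C.left_cancel hpy hpy' hyy'
      exact ⟨z, hz', hpz, hpy, hy', heq⟩

theorem zigzagDomIn_inter (hsub : IsSubcategory C Λ₀) (hfa : RelFinitelyAligned C Λ₀)
    {l : List (Λ × Λ)} (hl : ∀ p ∈ l, p.1 ∈ Λ₀ ∧ p.2 ∈ Λ₀) :
    zigzagDomIn C Set.univ l ∩ Λ₀ = zigzagDomIn C Λ₀ l := by
  ext x
  constructor
  · rintro ⟨⟨y, hy⟩, hx⟩
    exact ⟨y, zigzagRelIn_of_univ hsub hfa hy hl hx⟩
  · rintro ⟨y, hy⟩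
    exact ⟨⟨y, zigzagRelIn_mono (Set.subset_univ Λ₀) hy⟩, zigzagRelIn_mem_left hy⟩

theorem zigzagDomIn_singleton (p : Λ × Λ) :
    zigzagDomIn C Set.univ [p] = pShift C p.2 (pTail C p.1) := by
  ext x
  constructor
  · rintro ⟨y, _, ⟨rfl, -⟩, hpx, hpy, -, heq⟩
    exact ⟨hpx, y, hpy, heq⟩
  · rintro ⟨hpx, y, hpy, heq⟩
    exact ⟨y, x, ⟨rfl, trivial⟩, hpx, hpy, trivial, heq⟩

theorem mem_zigzagDomIn_cons {p : Λ × Λ} {l : List (Λ × Λ)} {x : Λ} :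
    x ∈ zigzagDomIn C Set.univ (p :: l) ↔
      ∃ z, zigzagRelIn C Set.univ l x z ∧ z ∈ zigzagDomIn C Set.univ [p] := by
  constructor
  · rintro ⟨y, z, hz, hpz, hpy, -, heq⟩
    exact ⟨z, hz, y, z, ⟨rfl, trivial⟩, hpz, hpy, trivial, heq⟩
  · rintro ⟨z, hz, y, _, ⟨rfl, -⟩, hpz, hpy, -, heq⟩
    exact ⟨y, z, hz, hpz, hpy, trivial, heq⟩

theorem zigzagDomIn_cons_inter_pTail {p : Λ × Λ} {l : List (Λ × Λ)} {γ y : Λ}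
    (hγy : zigzagRelIn C Set.univ l γ y) :
    zigzagDomIn C Set.univ (p :: l) ∩ pTail C γ =
      pMulSet C γ (pShift C y (zigzagDomIn C Set.univ [p])) := by
  have hsγy := zigzagRelIn_s_eq hγy
  ext x
  constructor
  · rintro ⟨hx, δ, hδ, rfl⟩
    obtain ⟨z, hz, hzp⟩ := mem_zigzagDomIn_cons.mp hx
    obtain rfl := zigzagRelIn_functional hz (zigzagRelIn_comp hγy hδ)
    exact ⟨δ, ⟨hsγy ▸ hδ, hzp⟩, hδ, rfl⟩
  · rintro ⟨δ, ⟨-, hδp⟩, hδ, rfl⟩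
    exact ⟨mem_zigzagDomIn_cons.mpr ⟨_, zigzagRelIn_comp hγy hδ, hδp⟩, δ, hδ, rfl⟩

theorem isTailUnion_zigzagDomIn_singleton (hfa : RelFinitelyAligned C Λ₀) {p : Λ × Λ}
    (hp : p.1 ∈ Λ₀ ∧ p.2 ∈ Λ₀) : IsTailUnion C Λ₀ (zigzagDomIn C Set.univ [p]) := by
  rw [zigzagDomIn_singleton]
  exact isTailUnion_pShift_pTail hfa hp.2 hp.1

theorem isTailUnion_zigzagDomIn (hsub : IsSubcategory C Λ₀) (hfa : RelFinitelyAligned C Λ₀)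
    (p : Λ × Λ) (l : List (Λ × Λ)) (hl : ∀ q ∈ p :: l, q.1 ∈ Λ₀ ∧ q.2 ∈ Λ₀) :
    IsTailUnion C Λ₀ (zigzagDomIn C Set.univ (p :: l)) := by
  induction l generalizing p with
  | nil => exact isTailUnion_zigzagDomIn_singleton hfa (hl p List.mem_cons_self)
  | cons q l ih =>
    have hql : ∀ r ∈ q :: l, r.1 ∈ Λ₀ ∧ r.2 ∈ Λ₀ := fun r hr =>
      hl r (List.mem_cons_of_mem p hr)
    obtain ⟨T, hTfin, hTΛ₀, hT⟩ := ih q hql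
    have hsplit : zigzagDomIn C Set.univ (p :: q :: l) =
        ⋃ γ ∈ T, zigzagDomIn C Set.univ (p :: q :: l) ∩ pTail C γ := by
      rw [← Set.inter_iUnion₂, ← hT]
      refine (Set.inter_eq_left.mpr fun x hx => ?_).symm
      obtain ⟨z, hz, -⟩ := mem_zigzagDomIn_cons.mp hx
      exact ⟨z, hz⟩
    rw [hsplit]
    refine isTailUnion_biUnion hTfin fun γ hγ => ?_
    obtain ⟨y, hγy⟩ : γ ∈ zigzagDomIn C Set.univ (q :: l) :=
      hT ▸ Set.mem_biUnion hγ (C.mem_pTail_self γ)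
    have hy : y ∈ Λ₀ :=
      zigzagRelIn_mem_right (zigzagRelIn_of_univ hsub hfa hγy hql (hTΛ₀ hγ))
    rw [zigzagDomIn_cons_inter_pTail hγy]
    have hp := isTailUnion_zigzagDomIn_singleton hfa (hl p List.mem_cons_self)
    exact (hp.pShift hfa hy).pMulSet hsub (hTΛ₀ hγ)

end Zigzag

def IsTailBoolean (C : CategoryOfPaths Λ) (Λ₀ E : Set Λ) : Prop :=
  ∃ A : Set Λ, A.Finite ∧ A ⊆ Λ₀ ∧ E ⊆ ⋃ α ∈ A, pTail C α ∧
    ∀ x y, (∀ α ∈ A, x ∈ pTail C α ↔ y ∈ pTail C α) → (x ∈ E ↔ y ∈ E)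

theorem IsTailUnion.isTailBoolean {E : Set Λ} (hE : IsTailUnion C Λ₀ E) :
    IsTailBoolean C Λ₀ E := by
  obtain ⟨T, hTfin, hTΛ₀, rfl⟩ := hE
  refine ⟨T, hTfin, hTΛ₀, subset_rfl, fun x y hxy => ?_⟩
  simp only [Set.mem_iUnion₂, exists_prop]
  exact exists_congr fun α => and_congr_right (hxy α)

theorem IsTailBoolean.of_subset_union {E F G : Set Λ} (hE : IsTailBoolean C Λ₀ E)
    (hF : IsTailBoolean C Λ₀ F) (hG : G ⊆ E ∪ F)
    (hmem : ∀ x y, (x ∈ E ↔ y ∈ E) → (x ∈ F ↔ y ∈ F) → (x ∈ G ↔ y ∈ G)) :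
    IsTailBoolean C Λ₀ G := by
  obtain ⟨A, hAfin, hAΛ₀, hEA, hA⟩ := hE
  obtain ⟨B, hBfin, hBΛ₀, hFB, hB⟩ := hF
  refine ⟨A ∪ B, hAfin.union hBfin, Set.union_subset hAΛ₀ hBΛ₀, ?_, fun x y hxy => ?_⟩
  · rw [Set.biUnion_union]
    exact hG.trans (Set.union_subset_union hEA hFB)
  · exact hmem x y (hA x y fun α hα => hxy α (.inl hα))
      (hB x y fun α hα => hxy α (.inr hα))

theorem exists_pTail_subset_inter (hfa : RelFinitelyAligned C Λ₀) {α β x : Λ}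
    (hα : α ∈ Λ₀) (hβ : β ∈ Λ₀) (hx : x ∈ pTail C α ∩ pTail C β) :
    ∃ γ ∈ Λ₀, x ∈ pTail C γ ∧ pTail C γ ⊆ pTail C α ∩ pTail C β := by
  obtain ⟨G, -, hGΛ₀, hG⟩ := hfa.1 α hα β hβ
  rw [hG, Set.mem_iUnion₂] at hx
  obtain ⟨γ, hγ, hxγ⟩ := hx
  exact ⟨γ, hGΛ₀ hγ, hxγ, hG ▸ Set.subset_biUnion_of_mem hγ⟩

theorem exists_pTail_subset_biInter (hfa : RelFinitelyAligned C Λ₀) {A : Set Λ}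
    (hA : A.Finite) (hAΛ₀ : A ⊆ Λ₀) {β x : Λ} (hβ : β ∈ Λ₀) (hx : x ∈ pTail C β)
    (hxA : ∀ α ∈ A, x ∈ pTail C α) :
    ∃ ε ∈ Λ₀, x ∈ pTail C ε ∧ ∀ α ∈ A, pTail C ε ⊆ pTail C α := by
  induction A, hA using Set.Finite.induction_on with
  | empty => exact ⟨β, hβ, hx, fun _ h => absurd h (Set.notMem_empty _)⟩
  | @insert a A _ _ ih =>
    obtain ⟨ε, hε, hxε, hεA⟩ := ih ((Set.subset_insert a A).trans hAΛ₀)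
      fun α hα => hxA α (.inr hα)
    obtain ⟨γ, hγ, hxγ, hγεa⟩ := exists_pTail_subset_inter hfa hε (hAΛ₀ (.inl rfl))
      ⟨hxε, hxA a (.inl rfl)⟩
    refine ⟨γ, hγ, hxγ, ?_⟩
    rintro α (rfl | hα)
    exacts [hγεa.trans Set.inter_subset_right,
      (hγεa.trans Set.inter_subset_left).trans (hεA α hα)]

theorem IsTailBoolean.inter_nonempty (hfa : RelFinitelyAligned C Λ₀) {E : Set Λ}
    (hE : IsTailBoolean C Λ₀ E) (hne : E.Nonempty) : (E ∩ Λ₀).Nonempty := by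
  obtain ⟨A, hAfin, hAΛ₀, hEA, hA⟩ := hE
  obtain ⟨x, hx⟩ := hne
  obtain ⟨β, hβ, hxβ⟩ := Set.mem_iUnion₂.mp (hEA hx)
  obtain ⟨ε, hε, hxε, hεA⟩ := exists_pTail_subset_biInter hfa (A := {α ∈ A | x ∈ pTail C α})
    (hAfin.subset (Set.sep_subset _ _)) ((Set.sep_subset _ _).trans hAΛ₀) (hAΛ₀ hβ) hxβ
    fun _ h => h.2
  refine ⟨ε, (hA x ε fun α hα => ⟨fun hxα => ?_, fun hεα => ?_⟩).mp hx, hε⟩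
  · exact hεA α ⟨hα, hxα⟩ (C.mem_pTail_self ε)
  · exact pTail_subset_of_mem hεα hxε

section RelativeRing

variable {S : Set Λ} {w : Λ}

theorem relD0_subset : ∀ E ∈ relD0 C Λ₀ S w, E ⊆ {α | α ∈ S ∧ C.r α = w} := by
  rintro E ⟨-, l, hl, -, -, hw, rfl⟩ x ⟨y, hxy⟩
  exact ⟨zigzagRelIn_mem_left hxy, (zigzagRelIn_r_eq l hl hxy).trans hw⟩

theorem isSetRing_relAring : IsSetRing (relAring C Λ₀ S w) :=
  isSetRing_setRingGenOn _ _

theorem isTailBoolean_of_mem_relAring (hsub : IsSubcategory C Λ₀)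
    (hfa : RelFinitelyAligned C Λ₀) {E : Set Λ} (hE : E ∈ relAring C Λ₀ Set.univ w) :
    IsTailBoolean C Λ₀ E := by
  refine setRingGenOn_induction relD0_subset ?_ isTailUnion_empty.isTailBoolean
    (fun E F hE hF => hE.of_subset_union hF subset_rfl fun x y hx hy => ?_)
    (fun E F hE hF => hE.of_subset_union hF (Set.inter_subset_left.trans Set.subset_union_left)
      fun x y hx hy => ?_)
    (fun E F hE hF => hE.of_subset_union hF (Set.sdiff_subset.trans Set.subset_union_left)
      fun x y hx hy => ?_) hE
  · rintro E ⟨-, _ | ⟨p, l⟩, hl, -, hlΛ₀, -, rfl⟩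
    · exact absurd rfl hl
    · exact (isTailUnion_zigzagDomIn hsub hfa p l hlΛ₀).isTailBoolean
  all_goals simp only [Set.mem_union, Set.mem_inter_iff, Set.mem_sdiff, hx, hy]

theorem eq_empty_of_inter_eq_empty (hsub : IsSubcategory C Λ₀) (hfa : RelFinitelyAligned C Λ₀)
    {E : Set Λ} (hE : E ∈ relAring C Λ₀ Set.univ w) (h : E ∩ Λ₀ = ∅) : E = ∅ :=
  Set.not_nonempty_iff_eq_empty.mp fun hne =>
    ((isTailBoolean_of_mem_relAring hsub hfa hE).inter_nonempty hfa hne).ne_empty h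

theorem injOn_inter_relAring (hsub : IsSubcategory C Λ₀) (hfa : RelFinitelyAligned C Λ₀) :
    Set.InjOn (· ∩ Λ₀) (relAring C Λ₀ Set.univ w) := by
  have hsubset : ∀ E ∈ relAring C Λ₀ Set.univ w, ∀ F ∈ relAring C Λ₀ Set.univ w,
      E ∩ Λ₀ = F ∩ Λ₀ → E ⊆ F := fun E hE F hF h => by
    rw [← Set.sdiff_eq_empty]
    refine eq_empty_of_inter_eq_empty hsub hfa (isSetRing_relAring.2.2.2 E hE F hF) ?_
    rw [Set.inter_sdiff_distrib_right, h, sdiff_self, Set.bot_eq_empty]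
  exact fun E hE F hF h => (hsubset E hE F hF h).antisymm (hsubset F hF E hE h.symm)

theorem inter_mem_relAring (hsub : IsSubcategory C Λ₀) (hfa : RelFinitelyAligned C Λ₀)
    {E : Set Λ} (hE : E ∈ relAring C Λ₀ Set.univ w) : E ∩ Λ₀ ∈ relAring C Λ₀ Λ₀ w := by
  obtain ⟨hempty, hunion, hinter, hdiff⟩ : IsSetRing (relAring C Λ₀ Λ₀ w) := isSetRing_relAring
  refine setRingGenOn_induction (P := fun E => E ∩ Λ₀ ∈ relAring C Λ₀ Λ₀ w) relD0_subset
    ?_ (by rwa [Set.empty_inter])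
    (fun E F hE hF => ?_) (fun E F hE hF => ?_) (fun E F hE hF => ?_) hE
  · rintro E ⟨-, l, hl, hZ, hlΛ₀, hw, rfl⟩
    rw [zigzagDomIn_inter hsub hfa hlΛ₀]
    rcases (zigzagDomIn C Λ₀ l).eq_empty_or_nonempty with h | h
    · rwa [h]
    · exact fun R hR => hR.2 ⟨h, l, hl, hZ, hlΛ₀, hw, rfl⟩
  · rw [Set.union_inter_distrib_right]; exact hunion _ hE _ hF
  · rw [Set.inter_inter_distrib_right]; exact hinter _ hE _ hF
  · rw [Set.inter_sdiff_distrib_right]; exact hdiff _ hE _ hF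

theorem exists_inter_eq_of_mem_relAring (hsub : IsSubcategory C Λ₀)
    (hfa : RelFinitelyAligned C Λ₀) {F : Set Λ} (hF : F ∈ relAring C Λ₀ Λ₀ w) :
    ∃ E ∈ relAring C Λ₀ Set.univ w, E ∩ Λ₀ = F := by
  obtain ⟨hempty, hunion, hinter, hdiff⟩ : IsSetRing (relAring C Λ₀ Set.univ w) :=
    isSetRing_relAring
  refine setRingGenOn_induction
    (P := fun F => ∃ E ∈ relAring C Λ₀ Set.univ w, E ∩ Λ₀ = F) relD0_subset
    ?_ ⟨∅, hempty, Set.empty_inter Λ₀⟩ ?_ ?_ ?_ hF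
  · rintro F ⟨hne, l, hl, hZ, hlΛ₀, hw, rfl⟩
    obtain ⟨x, y, hxy⟩ := hne
    refine ⟨zigzagDomIn C Set.univ l, fun R hR => hR.2 ⟨?_, l, hl, hZ, hlΛ₀, hw, rfl⟩,
      zigzagDomIn_inter hsub hfa hlΛ₀⟩
    exact ⟨x, y, zigzagRelIn_mono (Set.subset_univ Λ₀) hxy⟩
  · rintro _ _ ⟨E, hE, rfl⟩ ⟨F, hF, rfl⟩
    exact ⟨E ∪ F, hunion E hE F hF, Set.union_inter_distrib_right E F Λ₀⟩
  · rintro _ _ ⟨E, hE, rfl⟩ ⟨F, hF, rfl⟩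
    exact ⟨E ∩ F, hinter E hE F hF, Set.inter_inter_distrib_right E F Λ₀⟩
  · rintro _ _ ⟨E, hE, rfl⟩ ⟨F, hF, rfl⟩
    exact ⟨E \ F, hdiff E hE F hF, Set.inter_sdiff_distrib_right E F Λ₀⟩

end RelativeRing

theorem pMulSet_inter (hsub : IsSubcategory C Λ₀) (hfa : RelFinitelyAligned C Λ₀) {α : Λ}
    (hα : α ∈ Λ₀) (E : Set Λ) : pMulSet C α E ∩ Λ₀ = pMulSet C α (E ∩ Λ₀) := by
  ext x
  constructor
  · rintro ⟨⟨β, hβE, hαβ, rfl⟩, hαβΛ₀⟩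
    obtain ⟨β', hβ', hαβ', heq⟩ := (hfa.2 α hα).le ⟨⟨β, hαβ, rfl⟩, hαβΛ₀⟩
    obtain rfl := C.left_cancel hαβ hαβ' heq
    exact ⟨β, ⟨hβE, hβ'⟩, hαβ, rfl⟩
  · rintro ⟨β, ⟨hβE, hβ⟩, hαβ, rfl⟩
    exact ⟨⟨β, hβE, hαβ, rfl⟩, hsub.comp_mem hα hβ hαβ⟩

theorem pShift_inter (hsub : IsSubcategory C Λ₀) {α : Λ} (hα : α ∈ Λ₀) (E : Set Λ) :
    pShift C α E ∩ Λ₀ = pShiftIn C Λ₀ α ((E ∩ Λ₀) ∩ pMulSet C α Λ₀) := by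
  ext β
  constructor
  · rintro ⟨⟨hαβ, hE⟩, hβ⟩
    exact ⟨hβ, hαβ, ⟨hE, hsub.comp_mem hα hβ hαβ⟩, β, hβ, hαβ, rfl⟩
  · rintro ⟨hβ, hαβ, ⟨hE, -⟩, -⟩
    exact ⟨⟨hαβ, hE⟩, hβ⟩

end CategoryOfPaths

theorem statement4_general {Λ : Type u} (C : CategoryOfPaths Λ) (Λ₀ : Set Λ)
    (hsub : IsSubcategory C Λ₀) (hfa : RelFinitelyAligned C Λ₀)
    (v : Λ) :
    Set.BijOn (fun E => E ∩ Λ₀) (relAring C Λ₀ Set.univ v) (relAring C Λ₀ Λ₀ v) ∧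
    (∀ E ∈ relAring C Λ₀ Set.univ v, ∀ F ∈ relAring C Λ₀ Set.univ v,
      (E ∪ F) ∩ Λ₀ = (E ∩ Λ₀) ∪ (F ∩ Λ₀) ∧
      (E ∩ F) ∩ Λ₀ = (E ∩ Λ₀) ∩ (F ∩ Λ₀) ∧
      (E \ F) ∩ Λ₀ = (E ∩ Λ₀) \ (F ∩ Λ₀)) ∧
    (∀ α ∈ Λ₀, ∀ E ∈ relAring C Λ₀ Set.univ (C.s α),
      pMulSet C α E ∩ Λ₀ = pMulSet C α (E ∩ Λ₀)) ∧
    (∀ α ∈ Λ₀, ∀ E ∈ relAring C Λ₀ Set.univ (C.r α),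
      pShift C α E ∩ Λ₀ = pShiftIn C Λ₀ α ((E ∩ Λ₀) ∩ pMulSet C α Λ₀)) :=
  ⟨⟨fun _ hE => CategoryOfPaths.inter_mem_relAring hsub hfa hE,
      CategoryOfPaths.injOn_inter_relAring hsub hfa,
      fun _ hF => CategoryOfPaths.exists_inter_eq_of_mem_relAring hsub hfa hF⟩,
    fun E _ F _ => ⟨Set.union_inter_distrib_right E F Λ₀, Set.inter_inter_distrib_right E F Λ₀,
      Set.inter_sdiff_distrib_right E F Λ₀⟩,
    fun _ hα E _ => CategoryOfPaths.pMulSet_inter hsub hfa hα E,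
    fun _ hα E _ => CategoryOfPaths.pShift_inter hsub hα E⟩

/-- Proposition 3.6. For a finitely aligned relative category
of paths `(Λ₀, Λ)`, the map `E ↦ E ∩ Λ₀` restricts to a ring isomorphism
`𝒜(Λ₀,Λ)_v → 𝒜(Λ₀)_v`, equivariant for shifts by elements of `Λ₀`. -/
theorem statement4 {Λ : Type u} (C : CategoryOfPaths Λ) (Λ₀ : Set Λ)
    (hsub : IsSubcategory C Λ₀) (hfa : RelFinitelyAligned C Λ₀)
    (v : Λ) (hv0 : v ∈ Λ₀) (hv : C.r v = v) :
    Set.BijOn (fun E => E ∩ Λ₀) (relAring C Λ₀ Set.univ v) (relAring C Λ₀ Λ₀ v) ∧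
    (∀ E ∈ relAring C Λ₀ Set.univ v, ∀ F ∈ relAring C Λ₀ Set.univ v,
      (E ∪ F) ∩ Λ₀ = (E ∩ Λ₀) ∪ (F ∩ Λ₀) ∧
      (E ∩ F) ∩ Λ₀ = (E ∩ Λ₀) ∩ (F ∩ Λ₀) ∧
      (E \ F) ∩ Λ₀ = (E ∩ Λ₀) \ (F ∩ Λ₀)) ∧
    (∀ α ∈ Λ₀, ∀ E ∈ relAring C Λ₀ Set.univ (C.s α),
      pMulSet C α E ∩ Λ₀ = pMulSet C α (E ∩ Λ₀)) ∧
    (∀ α ∈ Λ₀, ∀ E ∈ relAring C Λ₀ Set.univ (C.r α),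
      pShift C α E ∩ Λ₀ = pShiftIn C Λ₀ α ((E ∩ Λ₀) ∩ pMulSet C α Λ₀)) :=
  statement4_general C Λ₀ hsub hfa v
end

section
/- Let (Λ₀, Λ) be a relative category of paths, and for each vertex v of Λ₀ let ℬ_v be a ring of sets on vΛ such that vΛ ∈ ℬ_v for every vertex v of Λ₀, {αE : E ∈ ℬ_{s(α)}} ⊆ ℬ_{r(α)} for all α ∈ Λ₀, and {σ^α(E ∩ αΛ) : E ∈ ℬ_{r(α)}} ⊆ ℬ_{s(α)} for all α ∈ Λ₀. If α ∈ Λ₀ and 𝒰 is an ultrafilter in ℬ_{s(α)}, then α𝒰 = {αE : E ∈ 𝒰} is an ultrafilter base in ℬ_{r(α)}. -/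
universe u v

variable {Λ : Type u}

/-- Lemma 4.1. If the rings of sets `ℬ_v` satisfy the
conditions of Proposition 2.10, `α ∈ Λ₀`, and `𝒰` is an ultrafilter in
`ℬ_{s(α)}`, then `α𝒰` is an ultrafilter base in `ℬ_{r(α)}`. -/
theorem statement5 {Λ : Type u} (C : CategoryOfPaths Λ) (Λ₀ : Set Λ)
    (hsub : IsSubcategory C Λ₀) (B : Λ → Set (Set Λ))
    (hring : ∀ v, v ∈ Λ₀ → C.r v = v → IsSetRingOn (pRng C v) (B v))
    (h1 : ∀ v, v ∈ Λ₀ → C.r v = v → pRng C v ∈ B v)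
    (h2 : ∀ α ∈ Λ₀, ∀ E ∈ B (C.s α), pMulSet C α E ∈ B (C.r α))
    (h3 : ∀ α ∈ Λ₀, ∀ E ∈ B (C.r α), pShift C α E ∈ B (C.s α))
    (α : Λ) (hα : α ∈ Λ₀) (U : Set (Set Λ))
    (hU : IsUltrafilterIn (B (C.s α)) U) :
    IsUltrafilterBaseIn (B (C.r α)) ((pMulSet C α) '' U) := by
  obtain ⟨⟨hUne, hUsub, hUnonemp, hUint, hUup⟩, hUmax⟩ := hU
  have hsα : C.s α ∈ Λ₀ := hsub.s_mem hα
  have hrα : C.r α ∈ Λ₀ := hsub.r_mem hα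
  have hringS := hring (C.s α) hsα (C.r_s α)
  have hringR := hring (C.r α) hrα (C.r_r α)
  have hsubR : ∀ E ∈ U, E ⊆ pRng C (C.s α) := fun E hE => hringS.2 E (hUsub hE)
  have hmem : ∀ E ∈ U, pMulSet C α E ∈ B (C.r α) := fun E hE => h2 α hα E (hUsub hE)
  have hne : ∀ E ∈ U, (pMulSet C α E).Nonempty := by
    intro E hE
    obtain ⟨β, hβ⟩ := hUnonemp E hE
    exact ⟨C.comp α β, β, hβ, (hsubR E hE hβ).symm, rfl⟩
  have hmul_inter : ∀ E F : Set Λ,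
      pMulSet C α (E ∩ F) = pMulSet C α E ∩ pMulSet C α F := by
    intro E F
    ext x
    constructor
    · rintro ⟨β, ⟨hβE, hβF⟩, hs, rfl⟩
      exact ⟨⟨β, hβE, hs, rfl⟩, ⟨β, hβF, hs, rfl⟩⟩
    · rintro ⟨⟨β, hβE, hs, rfl⟩, ⟨γ, hγF, hs', heq⟩⟩
      have hbg : β = γ := C.left_cancel hs hs' heq
      subst hbg
      exact ⟨β, ⟨hβE, hγF⟩, hs, rfl⟩
  -- the generated filter
  have genFilter : IsFilterIn (B (C.r α)) (filterGenBy (B (C.r α)) (pMulSet C α '' U)) := by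
    refine ⟨?_, fun E hE => hE.1, ?_, ?_, ?_⟩
    · obtain ⟨E, hE⟩ := hUne
      exact ⟨pMulSet C α E, hmem E hE, pMulSet C α E,
        Set.mem_image_of_mem _ hE, subset_rfl⟩
    · rintro E ⟨hER, F, ⟨E', hE', rfl⟩, hsb⟩
      exact (hne E' hE').mono hsb
    · rintro E ⟨hER, F, ⟨E', hE', rfl⟩, hsb⟩ E2 ⟨hER2, F2, ⟨E2', hE2', rfl⟩, hsb2⟩
      refine ⟨hringR.1.2.2.1 E hER E2 hER2, pMulSet C α (E' ∩ E2'),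
        Set.mem_image_of_mem _ (hUint E' hE' E2' hE2'), ?_⟩
      rw [hmul_inter]
      exact Set.inter_subset_inter hsb hsb2
    · rintro E ⟨hER, F, hF, hsb⟩ G hGR hEG
      exact ⟨hGR, F, hF, hsb.trans hEG⟩
  refine ⟨⟨hUne.image _, ?_, ?_, ?_⟩, genFilter, ?_⟩
  · rintro E ⟨E', hE', rfl⟩
    exact hmem E' hE'
  · rintro E ⟨E', hE', rfl⟩
    exact hne E' hE'
  · rintro E ⟨E', hE', rfl⟩ F ⟨F', hF', rfl⟩
    exact ⟨pMulSet C α (E' ∩ F'),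
      Set.mem_image_of_mem _ (hUint E' hE' F' hF'), (hmul_inter E' F').le⟩
  -- maximality
  intro V hV hsubV
  obtain ⟨hVne, hVsub, hVnonemp, hVint, hVup⟩ := hV
  refine Set.Subset.antisymm ?_ hsubV
  intro G hGV
  have hG : G ∈ B (C.r α) := hVsub hGV
  have hσG : pShift C α G ∈ B (C.s α) := h3 α hα G hG
  have hkey : ∀ E ∈ U, (pShift C α G ∩ E).Nonempty := by
    intro E hE
    have h1' : pMulSet C α E ∈ V :=
      hsubV ⟨hmem E hE, pMulSet C α E, Set.mem_image_of_mem _ hE, subset_rfl⟩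
    have h2' : G ∩ pMulSet C α E ∈ V := hVint G hGV _ h1'
    obtain ⟨x, hxG, β, hβE, hs, rfl⟩ := hVnonemp _ h2'
    exact ⟨β, ⟨hs, hxG⟩, hβE⟩
  set W : Set (Set Λ) :=
    {F | F ∈ B (C.s α) ∧ ∃ E ∈ U, pShift C α G ∩ E ⊆ F} with hWdef
  have hWfilter : IsFilterIn (B (C.s α)) W := by
    refine ⟨?_, fun F hF => hF.1, ?_, ?_, ?_⟩
    · obtain ⟨E, hE⟩ := hUne
      exact ⟨pShift C α G ∩ E,
        ⟨hringS.1.2.2.1 _ hσG E (hUsub hE), E, hE, subset_rfl⟩⟩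
    · rintro F ⟨hF, E, hE, hsb⟩
      exact (hkey E hE).mono hsb
    · rintro F ⟨hF, E, hE, hsb⟩ F' ⟨hF', E', hE', hsb'⟩
      refine ⟨hringS.1.2.2.1 F hF F' hF', E ∩ E', hUint E hE E' hE', ?_⟩
      intro x hx
      exact ⟨hsb ⟨hx.1, hx.2.1⟩, hsb' ⟨hx.1, hx.2.2⟩⟩
    · rintro F ⟨hF, E, hE, hsb⟩ F' hF' hFF'
      exact ⟨hF', E, hE, hsb.trans hFF'⟩
  have hUW : U ⊆ W := fun E hE => ⟨hUsub hE, E, hE, Set.inter_subset_right⟩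
  have hWU : W = U := hUmax W hWfilter hUW
  have hσGU : pShift C α G ∈ U := by
    rw [← hWU]
    obtain ⟨E, hE⟩ := hUne
    exact ⟨hσG, E, hE, Set.inter_subset_left⟩
  refine ⟨hG, pMulSet C α (pShift C α G),
    Set.mem_image_of_mem _ hσGU, ?_⟩
  rintro x ⟨β, ⟨hs, hmemG⟩, hs', rfl⟩
  exact hmemG
end
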